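/- arXiv:2411.12345 — 5 statements merged into one kernel-verified Lean document; each statement's English description precedes it below -/
import Mathlib

section
/- Let (a_i)_{i≥1}, (b_i)_{i≥0}, (λ_i)_{i≥1} be sequences of complex numbers with a_n ≠ 0 and P_n(−λ_n/a_n) ≠ 0 for all n ≥ 1, where P_n are defined by the three-term recurrence with c_i = 0 for all i (orthogonal polynomials of type R_I); these P_n are monic with deg P_n = n, so every polynomial has a unique expansion in the P_s, and the dual coefficients τ_{n,r,s} are defined by x^n P_r(x) = Σ_{s≥0} τ_{n,r,s} P_s(x). Then for all n, r, s ≥ 0, the set RΓ^I_{n,r,s} of restricted R_II paths from (0,r) to (n,s) containing no B steps is finite, and τ_{n,r,s} = Σ_{p∈RΓ^I_{n,r,s}} wt(p). -/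
open Polynomial

/-- Steps of an `R_II` path: up, horizontal, down, vertical-down, backward-down. -/
inductive RStep : Type
  | U | H | D | V | B
  deriving DecidableEq

/-- Displacement of each step. -/
def RStep.disp : RStep → ℤ × ℤ
  | .U => (1, 1)
  | .H => (1, 0)
  | .D => (1, -1)
  | .V => (0, -1)
  | .B => (-1, -1)

/-- End point of a lattice path starting at `start` with the given list of steps. -/
def endPt (start : ℤ × ℤ) : List RStep → ℤ × ℤ
  | [] => start
  | s :: l => endPt (start + s.disp) l

/-- All intermediate heights along the path (starting at height `h`) are nonnegative,
so that the points of the path lie in `ℤ × ℤ≥0`. -/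
def heightsNonneg (h : ℤ) : List RStep → Prop
  | [] => True
  | s :: l => 0 ≤ h + s.disp.2 ∧ heightsNonneg (h + s.disp.2) l

/-- `Gamma n r s` is the set of `R_II` paths from `(0, r)` to `(n, s)`. -/
def Gamma (n r s : ℕ) : Set (List RStep) :=
  {l | heightsNonneg (r : ℤ) l ∧ endPt (0, (r : ℤ)) l = ((n : ℤ), (s : ℤ))}

/-- The list of all points visited by a path. -/
def pathPoints (start : ℤ × ℤ) : List RStep → List (ℤ × ℤ)
  | [] => [start]
  | s :: l => start :: pathPoints (start + s.disp) l

/-- `RGamma n r s` is the set of restricted `R_II` paths from `(0, r)` to `(n, s)`: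
paths in `Gamma n r s` whose points have first coordinate `n` only at the final point. -/
def RGamma (n r s : ℕ) : Set (List RStep) :=
  {l | l ∈ Gamma n r s ∧ ∀ p ∈ (pathPoints (0, (r : ℤ)) l).dropLast, p.1 ≠ (n : ℤ)}

/-- Weight of a single step starting at height `h`:
`1` for `U`, `b_i` for `H`, `λ_i` for `D`, `a_i` for `V`, `c_i` for `B` starting at height `i`. -/
def stepWt {R : Type*} [CommRing R] (a b lam c : ℕ → R) (h : ℤ) : RStep → R
  | .U => 1
  | .H => b h.toNat
  | .D => lam h.toNat
  | .V => a h.toNat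
  | .B => c h.toNat

/-- Weight of a path starting at height `h`: the product of the weights of its steps. -/
def pathWt {R : Type*} [CommRing R] (a b lam c : ℕ → R) : ℤ → List RStep → R
  | _, [] => 1
  | h, s :: l => stepWt a b lam c h s * pathWt a b lam c (h + s.disp.2) l
/-- The polynomials `P_n` defined by `P_0 = 1`, `P_1 = x - b_0` and
`P_{n+1} = (x - b_n) P_n - (c_n x² + a_n x + λ_n) P_{n-1}` (so `P_{-1} = 0`). -/
noncomputable def Ppoly {R : Type*} [CommRing R] (a b lam c : ℕ → R) : ℕ → Polynomial R
  | 0 => 1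
  | 1 => X - C (b 0)
  | n + 2 =>
      (X - C (b (n + 1))) * Ppoly a b lam c (n + 1) -
        (C (c (n + 1)) * X ^ 2 + C (a (n + 1)) * X + C (lam (n + 1))) * Ppoly a b lam c n

/-- `d_m(x) = ∏_{i=1}^m (c_i x² + a_i x + λ_i)`, with `d_0 = 1`. -/
noncomputable def dpoly {R : Type*} [CommRing R] (a lam c : ℕ → R) (m : ℕ) : Polynomial R :=
  ∏ i ∈ Finset.range m, (C (c (i + 1)) * X ^ 2 + C (a (i + 1)) * X + C (lam (i + 1)))

/-- `RΓ^I_{n,r,s}`: restricted `R_II` paths from `(0, r)` to `(n, s)` with no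
backward-down (`B`) steps. -/
def RGammaI (n r s : ℕ) : Set (List RStep) :=
  {l | l ∈ RGamma n r s ∧ RStep.B ∉ l}


noncomputable section AuxStmt9

/-- One step of the coefficient recursion. -/
def Tstep9 (a b lam : ℕ → ℂ) (prev : ℕ → ℕ → ℂ) : ℕ → ℕ → ℂ
  | 0, s => prev 1 s + b 0 * prev 0 s
  | h+1, s => prev (h+2) s + b (h+1) * prev (h+1) s + lam (h+1) * prev h s
      + a (h+1) * Tstep9 a b lam prev h s

/-- The path-counting coefficients. -/
def Tfun9 (a b lam : ℕ → ℂ) : ℕ → ℕ → ℕ → ℂ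
  | 0 => fun h s => if h = s then 1 else 0
  | n+1 => Tstep9 a b lam (Tfun9 a b lam n)

lemma Ppoly_succ_succ (a b lam : ℕ → ℂ) (h : ℕ) :
    Ppoly a b lam (fun _ => 0) (h+2) =
      (X - C (b (h+1))) * Ppoly a b lam (fun _ => 0) (h+1) -
        (C (a (h+1)) * X + C (lam (h+1))) * Ppoly a b lam (fun _ => 0) h := by
  show (X - C (b (h + 1))) * Ppoly a b lam (fun _ => 0) (h + 1) -
        (C ((fun _ => (0:ℂ)) (h+1)) * X ^ 2 + C (a (h + 1)) * X + C (lam (h + 1))) *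
          Ppoly a b lam (fun _ => 0) h = _
  simp

lemma Ppoly_monic_natDegree (a b lam : ℕ → ℂ) (n : ℕ) :
    (Ppoly a b lam (fun _ => 0) n).Monic ∧ (Ppoly a b lam (fun _ => 0) n).natDegree = n := by
  induction n using Nat.strong_induction_on with
  | _ n ih =>
    match n with
    | 0 => exact ⟨monic_one, natDegree_one⟩
    | 1 => exact ⟨monic_X_sub_C _, natDegree_X_sub_C _⟩
    | n+2 =>
      obtain ⟨h1m, h1d⟩ := ih (n+1) (by omega)
      obtain ⟨h0m, h0d⟩ := ih n (by omega)
      have hm : ((X - C (b (n+1))) * Ppoly a b lam (fun _ => 0) (n+1)).Monic :=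
        (monic_X_sub_C _).mul h1m
      have hdm : ((X - C (b (n+1))) * Ppoly a b lam (fun _ => 0) (n+1)).degree = ((n+2 : ℕ) : WithBot ℕ) := by
        rw [degree_eq_natDegree hm.ne_zero, (monic_X_sub_C (b (n+1))).natDegree_mul h1m, natDegree_X_sub_C, h1d]
        rw [add_comm]
      have hq : ((C (a (n+1)) * X + C (lam (n+1))) * Ppoly a b lam (fun _ => 0) n).degree
          < ((n+2 : ℕ) : WithBot ℕ) := by
        calc ((C (a (n+1)) * X + C (lam (n+1))) * Ppoly a b lam (fun _ => 0) n).degree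
            ≤ (C (a (n+1)) * X + C (lam (n+1))).degree + (Ppoly a b lam (fun _ => 0) n).degree :=
              degree_mul_le _ _
          _ ≤ 1 + (n : WithBot ℕ) := add_le_add degree_linear_le
              (by rw [degree_eq_natDegree h0m.ne_zero, h0d])
          _ < ((n+2 : ℕ) : WithBot ℕ) := by
              rw [show (1 : WithBot ℕ) + (n : WithBot ℕ) = ((1 + n : ℕ) : WithBot ℕ) by norm_cast]
              exact_mod_cast by omega
      rw [Ppoly_succ_succ]
      refine ⟨hm.sub_of_left (hdm ▸ hq), ?_⟩
      have := degree_sub_eq_left_of_degree_lt (hdm ▸ hq)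
      rw [hdm] at this
      exact natDegree_eq_of_degree_eq_some this

lemma Tfun9_support (a b lam : ℕ → ℂ) (s : ℕ) :
    ∀ n h, n + h < s → Tfun9 a b lam n h s = 0 := by
  intro n
  induction n with
  | zero =>
    intro h hh
    simp only [Tfun9]
    rw [if_neg (by omega)]
  | succ n ihn =>
    intro h
    induction h with
    | zero =>
      intro hs
      show Tstep9 a b lam (Tfun9 a b lam n) 0 s = 0
      rw [Tstep9, ihn 1 (by omega), ihn 0 (by omega)]
      ring
    | succ h ihh =>
      intro hs
      show Tstep9 a b lam (Tfun9 a b lam n) (h+1) s = 0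
      rw [Tstep9, ihn (h+2) (by omega), ihn (h+1) (by omega), ihn h (by omega),
        show Tstep9 a b lam (Tfun9 a b lam n) h s = Tfun9 a b lam (n+1) h s from rfl,
        ihh (by omega)]
      ring

lemma Tfun9_pad (a b lam : ℕ → ℂ) (n h M : ℕ) (hM : n + h + 1 ≤ M) :
    ∑ s ∈ Finset.range (n+h+1), C (Tfun9 a b lam n h s) * Ppoly a b lam (fun _ => 0) s
      = ∑ s ∈ Finset.range M, C (Tfun9 a b lam n h s) * Ppoly a b lam (fun _ => 0) s := by
  apply Finset.sum_subset (Finset.range_subset_range.2 hM)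
  intro s hs hns
  rw [Tfun9_support a b lam s n h (by simp only [Finset.mem_range] at hns ⊢; omega)]
  simp

lemma Ppoly_expand (a b lam : ℕ → ℂ) :
    ∀ n h, (X : Polynomial ℂ)^n * Ppoly a b lam (fun _ => 0) h
      = ∑ s ∈ Finset.range (n+h+1), C (Tfun9 a b lam n h s) * Ppoly a b lam (fun _ => 0) s := by
  intro n
  induction n with
  | zero =>
    intro h
    rw [Finset.sum_eq_single_of_mem h (by simp [Finset.mem_range])]
    · simp [Tfun9]
    · intro t _ ht
      simp only [Tfun9]
      rw [if_neg (by omega)]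
      simp
  | succ n ihn =>
    intro h
    induction h with
    | zero =>
      have e1 : (X : Polynomial ℂ) * Ppoly a b lam (fun _ => 0) 0
          = Ppoly a b lam (fun _ => 0) 1 + C (b 0) * Ppoly a b lam (fun _ => 0) 0 := by
        show (X : Polynomial ℂ) * 1 = (X - C (b 0)) + C (b 0) * 1
        ring
      calc (X : Polynomial ℂ)^(n+1) * Ppoly a b lam (fun _ => 0) 0
          = X^n * (X * Ppoly a b lam (fun _ => 0) 0) := by ring
        _ = X^n * Ppoly a b lam (fun _ => 0) 1 + C (b 0) * (X^n * Ppoly a b lam (fun _ => 0) 0) := by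
            rw [e1]; ring
        _ = ∑ s ∈ Finset.range (n+0+2), (C (Tfun9 a b lam n 1 s) * Ppoly a b lam (fun _ => 0) s
              + C (b 0) * (C (Tfun9 a b lam n 0 s) * Ppoly a b lam (fun _ => 0) s)) := by
            rw [ihn 1, ihn 0, Tfun9_pad a b lam n 0 (n+0+2) (by omega), Finset.mul_sum,
              ← Finset.sum_add_distrib]
        _ = ∑ s ∈ Finset.range ((n+1)+0+1), C (Tfun9 a b lam (n+1) 0 s) * Ppoly a b lam (fun _ => 0) s := by
            apply Finset.sum_congr (by norm_num)
            intro s _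
            show _ = C (Tstep9 a b lam (Tfun9 a b lam n) 0 s) * _
            rw [Tstep9]
            simp only [C_add, C_mul]
            ring
    | succ h ihh =>
      have e1 : (X : Polynomial ℂ) * Ppoly a b lam (fun _ => 0) (h+1)
          = Ppoly a b lam (fun _ => 0) (h+2) + C (b (h+1)) * Ppoly a b lam (fun _ => 0) (h+1)
            + C (lam (h+1)) * Ppoly a b lam (fun _ => 0) h
            + C (a (h+1)) * (X * Ppoly a b lam (fun _ => 0) h) := by
        rw [Ppoly_succ_succ]; ring
      calc (X : Polynomial ℂ)^(n+1) * Ppoly a b lam (fun _ => 0) (h+1)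
          = X^n * (X * Ppoly a b lam (fun _ => 0) (h+1)) := by ring
        _ = X^n * Ppoly a b lam (fun _ => 0) (h+2)
            + C (b (h+1)) * (X^n * Ppoly a b lam (fun _ => 0) (h+1))
            + C (lam (h+1)) * (X^n * Ppoly a b lam (fun _ => 0) h)
            + C (a (h+1)) * (X^(n+1) * Ppoly a b lam (fun _ => 0) h) := by
            rw [e1]; ring
        _ = ∑ s ∈ Finset.range (n+h+3),
              (C (Tfun9 a b lam n (h+2) s) * Ppoly a b lam (fun _ => 0) s
              + C (b (h+1)) * (C (Tfun9 a b lam n (h+1) s) * Ppoly a b lam (fun _ => 0) s)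
              + C (lam (h+1)) * (C (Tfun9 a b lam n h s) * Ppoly a b lam (fun _ => 0) s)
              + C (a (h+1)) * (C (Tfun9 a b lam (n+1) h s) * Ppoly a b lam (fun _ => 0) s)) := by
            rw [ihn (h+2), ihn (h+1), ihn h, ihh,
              Tfun9_pad a b lam n (h+1) (n+h+3) (by omega),
              Tfun9_pad a b lam n h (n+h+3) (by omega),
              Tfun9_pad a b lam (n+1) h (n+h+3) (by omega),
              show n+(h+2)+1 = n+h+3 by omega,
              Finset.mul_sum, Finset.mul_sum, Finset.mul_sum,
              ← Finset.sum_add_distrib, ← Finset.sum_add_distrib, ← Finset.sum_add_distrib]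
        _ = ∑ s ∈ Finset.range ((n+1)+(h+1)+1),
              C (Tfun9 a b lam (n+1) (h+1) s) * Ppoly a b lam (fun _ => 0) s := by
            apply Finset.sum_congr (by congr 1; omega)
            intro s _
            show _ = C (Tstep9 a b lam (Tfun9 a b lam n) (h+1) s) * _
            rw [Tstep9]
            simp only [C_add, C_mul]
            show _ = (_ + _ + _ + C (a (h+1)) * C (Tfun9 a b lam (n+1) h s)) * _
            ring

lemma Ppoly_expand_finsum (a b lam : ℕ → ℂ) (n h : ℕ) :
    (X : Polynomial ℂ)^n * Ppoly a b lam (fun _ => 0) h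
      = ∑ᶠ s : ℕ, C (Tfun9 a b lam n h s) * Ppoly a b lam (fun _ => 0) s := by
  rw [Ppoly_expand a b lam n h]
  symm
  apply finsum_eq_finset_sum_of_support_subset
  intro s hs
  simp only [Function.mem_support] at hs
  simp only [Finset.coe_range, Set.mem_Iio]
  by_contra hc
  exact hs (by rw [Tfun9_support a b lam s n h (by omega)]; simp)

lemma Ppoly_unique (a b lam : ℕ → ℂ) (f : ℕ → ℂ) (hf : {s : ℕ | f s ≠ 0}.Finite)
    (h0 : ∑ᶠ s : ℕ, C (f s) * Ppoly a b lam (fun _ => 0) s = 0) : ∀ s, f s = 0 := by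
  by_contra hc
  push_neg at hc
  obtain ⟨s0, hs0⟩ := hc
  have hne : hf.toFinset.Nonempty := ⟨s0, by simp [hs0]⟩
  set m := hf.toFinset.max' hne with hm
  have hsum : ∑ s ∈ hf.toFinset, C (f s) * Ppoly a b lam (fun _ => 0) s = 0 := by
    rw [← h0]
    symm
    apply finsum_eq_finset_sum_of_support_subset
    intro s hs
    simp only [Function.mem_support] at hs
    simp only [Set.Finite.coe_toFinset, Set.mem_setOf_eq]
    intro hfs
    exact hs (by rw [hfs]; simp)
  have hcoeff := congrArg (fun p => Polynomial.coeff p m) hsum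
  simp only [finset_sum_coeff, coeff_C_mul, coeff_zero] at hcoeff
  rw [Finset.sum_eq_single_of_mem m (hf.toFinset.max'_mem hne)] at hcoeff
  · obtain ⟨hmon, hdeg⟩ := Ppoly_monic_natDegree a b lam m
    rw [show (Ppoly a b lam (fun _ => 0) m).coeff m = 1 by
      nth_rewrite 2 [← hdeg]; exact hmon.coeff_natDegree] at hcoeff
    have : f m ≠ 0 := by
      have := hf.toFinset.max'_mem hne
      simp only [Set.Finite.mem_toFinset, Set.mem_setOf_eq] at this
      exact this
    exact this (by simpa using hcoeff)
  · intro t ht htm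
    have hlt : t < m := lt_of_le_of_ne (hf.toFinset.le_max' t ht) htm
    obtain ⟨hmon, hdeg⟩ := Ppoly_monic_natDegree a b lam t
    rw [coeff_eq_zero_of_natDegree_lt (by omega : (Ppoly a b lam (fun _ => 0) t).natDegree < m)]
    ring

lemma tau_eq_Tfun9 (a b lam : ℕ → ℂ) (τ : ℕ → ℕ → ℕ → ℂ)
    (hfin : ∀ n r : ℕ, {s : ℕ | τ n r s ≠ 0}.Finite)
    (hexp : ∀ n r : ℕ, (X ^ n * Ppoly a b lam (fun _ => 0) r : Polynomial ℂ) =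
      ∑ᶠ s : ℕ, C (τ n r s) * Ppoly a b lam (fun _ => 0) s)
    (n r s : ℕ) : τ n r s = Tfun9 a b lam n r s := by
  have hfin2 : {s : ℕ | Tfun9 a b lam n r s ≠ 0}.Finite := by
    apply Set.Finite.subset (Set.finite_Iio (n + r + 1))
    intro t ht
    simp only [Set.mem_setOf_eq] at ht
    simp only [Set.mem_Iio]
    by_contra hc
    exact ht (Tfun9_support a b lam t n r (by omega))
  have key : ∀ t, τ n r t - Tfun9 a b lam n r t = 0 := by
    apply Ppoly_unique a b lam _ (by
      apply Set.Finite.subset ((hfin n r).union hfin2)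
      intro t ht
      simp only [Set.mem_setOf_eq] at ht
      simp only [Set.mem_union, Set.mem_setOf_eq]
      by_contra hc
      push_neg at hc
      exact ht (by rw [hc.1, hc.2]; ring))
    have supp1 : (Function.support fun t => C (τ n r t) * Ppoly a b lam (fun _ => 0) t).Finite := by
      apply Set.Finite.subset (hfin n r)
      intro t ht
      simp only [Function.mem_support] at ht
      simp only [Set.mem_setOf_eq]
      intro hz
      exact ht (by rw [hz]; simp)
    have supp2 : (Function.support fun t => C (Tfun9 a b lam n r t) * Ppoly a b lam (fun _ => 0) t).Finite := by
      apply Set.Finite.subset hfin2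
      intro t ht
      simp only [Function.mem_support] at ht
      simp only [Set.mem_setOf_eq]
      intro hz
      exact ht (by rw [hz]; simp)
    have : ∑ᶠ t : ℕ, (C (τ n r t) * Ppoly a b lam (fun _ => 0) t
        - C (Tfun9 a b lam n r t) * Ppoly a b lam (fun _ => 0) t) = 0 := by
      rw [finsum_sub_distrib supp1 supp2, ← hexp n r, ← Ppoly_expand_finsum a b lam n r]
      ring
    rw [← this]
    apply finsum_congr
    intro t
    rw [C_sub]
    ring
  have := key s
  linear_combination this

lemma endPt_add (v : ℤ × ℤ) (l : List RStep) :
    ∀ start : ℤ × ℤ, endPt (start + v) l = endPt start l + v := by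
  induction l with
  | nil => intro start; rfl
  | cons st t ih =>
    intro start
    show endPt (start + v + st.disp) t = endPt (start + st.disp) t + v
    rw [add_right_comm, ih]

lemma pathPoints_add (v : ℤ × ℤ) (l : List RStep) :
    ∀ start : ℤ × ℤ, pathPoints (start + v) l = (pathPoints start l).map (· + v) := by
  induction l with
  | nil => intro start; rfl
  | cons st t ih =>
    intro start
    show (start + v) :: pathPoints (start + v + st.disp) t
      = (start + v) :: (pathPoints (start + st.disp) t).map (· + v)
    rw [add_right_comm, ih]

lemma pathPoints_ne_nil (start : ℤ × ℤ) (l : List RStep) : pathPoints start l ≠ [] := by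
  cases l <;> simp [pathPoints]

lemma mem_RGammaI_iff {n r s : ℕ} {l : List RStep} :
    l ∈ RGammaI n r s ↔ heightsNonneg (r : ℤ) l ∧ endPt (0, (r : ℤ)) l = ((n : ℤ), (s : ℤ))
      ∧ (∀ p ∈ (pathPoints (0, (r : ℤ)) l).dropLast, p.1 ≠ (n : ℤ)) ∧ RStep.B ∉ l := by
  simp only [RGammaI, RGamma, Gamma, Set.mem_setOf_eq]
  tauto

lemma mem_RGammaI_zero {r s : ℕ} {l : List RStep} :
    l ∈ RGammaI 0 r s ↔ l = [] ∧ r = s := by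
  rw [mem_RGammaI_iff]
  constructor
  · rintro ⟨hn, he, hr, hb⟩
    cases l with
    | nil =>
      refine ⟨rfl, ?_⟩
      have : ((0 : ℤ), (r : ℤ)) = ((0 : ℤ), (s : ℤ)) := by simpa [endPt] using he
      have h2 : (r : ℤ) = (s : ℤ) := (Prod.ext_iff.1 this).2
      exact_mod_cast h2
    | cons st t =>
      exfalso
      have hmem : ((0 : ℤ), (r : ℤ)) ∈ (pathPoints (0, (r : ℤ)) (st :: t)).dropLast := by
        show _ ∈ (((0 : ℤ), (r : ℤ)) :: pathPoints ((0, (r:ℤ)) + st.disp) t).dropLast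
        rw [List.dropLast_cons_of_ne_nil (pathPoints_ne_nil _ _)]
        exact List.mem_cons_self
      exact hr _ hmem (by simp)
  · rintro ⟨rfl, rfl⟩
    exact ⟨trivial, by simp [endPt], by simp [pathPoints], by simp⟩

lemma tail_shift (n s : ℕ) (h' : ℤ) (t : List RStep) :
    (endPt ((1 : ℤ), h') t = ((n : ℤ) + 1, (s : ℤ)) ∧
      ∀ p ∈ (pathPoints ((1 : ℤ), h') t).dropLast, p.1 ≠ (n : ℤ) + 1)
    ↔ (endPt ((0 : ℤ), h') t = ((n : ℤ), (s : ℤ)) ∧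
      ∀ p ∈ (pathPoints ((0 : ℤ), h') t).dropLast, p.1 ≠ (n : ℤ)) := by
  have hstart : ((1 : ℤ), h') = ((0 : ℤ), h') + ((1 : ℤ), (0 : ℤ)) := by simp
  rw [hstart, endPt_add, pathPoints_add, ← List.map_dropLast]
  constructor
  · rintro ⟨he, hp⟩
    constructor
    · have := Prod.ext_iff.1 he
      simp only [Prod.fst_add, Prod.snd_add] at this
      ext
      · omega
      · simpa using this.2
    · intro p hp2
      have := hp (p + (1, 0)) (List.mem_map_of_mem hp2)
      simp only [Prod.fst_add] at this
      omega
  · rintro ⟨he, hp⟩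
    constructor
    · rw [he]; ext <;> simp
    · intro p hp2
      rw [List.mem_map] at hp2
      obtain ⟨q, hq, rfl⟩ := hp2
      have := hp q hq
      simp only [Prod.fst_add]
      omega

lemma mem_RGammaI_cons {n r s : ℕ} {st : RStep} {t : List RStep} :
    st :: t ∈ RGammaI (n+1) r s ↔
      0 ≤ (r : ℤ) + st.disp.2 ∧ heightsNonneg ((r : ℤ) + st.disp.2) t ∧
      endPt ((0, (r : ℤ)) + st.disp) t = ((n : ℤ) + 1, (s : ℤ)) ∧
      (∀ p ∈ (pathPoints ((0, (r : ℤ)) + st.disp) t).dropLast, p.1 ≠ (n : ℤ) + 1) ∧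
      st ≠ RStep.B ∧ RStep.B ∉ t := by
  rw [mem_RGammaI_iff]
  show (0 ≤ (r : ℤ) + st.disp.2 ∧ heightsNonneg ((r : ℤ) + st.disp.2) t) ∧ _ ↔ _
  have hpts : (pathPoints (0, (r : ℤ)) (st :: t)).dropLast
      = (0, (r : ℤ)) :: (pathPoints ((0, (r : ℤ)) + st.disp) t).dropLast := by
    show (((0 : ℤ), (r : ℤ)) :: pathPoints ((0, (r:ℤ)) + st.disp) t).dropLast = _
    rw [List.dropLast_cons_of_ne_nil (pathPoints_ne_nil _ _)]
  rw [hpts]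
  push_cast
  simp only [List.mem_cons, forall_eq_or_imp, List.mem_cons (a := RStep.B)]
  constructor
  · rintro ⟨⟨h1, h2⟩, h3, ⟨_, h4⟩, h5⟩
    exact ⟨h1, h2, h3, h4, fun h => h5 (Or.inl h.symm), fun h => h5 (Or.inr h)⟩
  · rintro ⟨h1, h2, h3, h4, h5, h6⟩
    refine ⟨⟨h1, h2⟩, h3, ⟨by simp; omega, h4⟩, ?_⟩
    rintro (h | h)
    exacts [h5 h.symm, h6 h]

lemma cons_U_mem {n r s : ℕ} {t : List RStep} :
    RStep.U :: t ∈ RGammaI (n+1) r s ↔ t ∈ RGammaI n (r+1) s := by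
  rw [mem_RGammaI_cons,
    show ((0:ℤ), (r:ℤ)) + RStep.U.disp = ((1:ℤ), ((r+1:ℕ):ℤ)) from by
      simp [RStep.disp, Prod.ext_iff],
    show ((r:ℤ) + RStep.U.disp.2) = ((r+1:ℕ):ℤ) from by simp [RStep.disp],
    mem_RGammaI_iff]
  constructor
  · rintro ⟨_, h2, h3, h4, _, h6⟩
    obtain ⟨e1, e2⟩ := (tail_shift n s _ t).1 ⟨h3, h4⟩
    exact ⟨h2, e1, e2, h6⟩
  · rintro ⟨h2, h3, h4, h6⟩
    obtain ⟨e1, e2⟩ := (tail_shift n s _ t).2 ⟨h3, h4⟩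
    exact ⟨by positivity, h2, e1, e2, by simp, h6⟩

lemma cons_H_mem {n r s : ℕ} {t : List RStep} :
    RStep.H :: t ∈ RGammaI (n+1) r s ↔ t ∈ RGammaI n r s := by
  rw [mem_RGammaI_cons,
    show ((0:ℤ), (r:ℤ)) + RStep.H.disp = ((1:ℤ), (r:ℤ)) from by
      simp [RStep.disp, Prod.ext_iff],
    show ((r:ℤ) + RStep.H.disp.2) = ((r:ℕ):ℤ) from by simp [RStep.disp],
    mem_RGammaI_iff]
  constructor
  · rintro ⟨_, h2, h3, h4, _, h6⟩
    obtain ⟨e1, e2⟩ := (tail_shift n s _ t).1 ⟨h3, h4⟩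
    exact ⟨h2, e1, e2, h6⟩
  · rintro ⟨h2, h3, h4, h6⟩
    obtain ⟨e1, e2⟩ := (tail_shift n s _ t).2 ⟨h3, h4⟩
    exact ⟨by positivity, h2, e1, e2, by simp, h6⟩

lemma cons_D_mem {n r s : ℕ} {t : List RStep} :
    RStep.D :: t ∈ RGammaI (n+1) (r+1) s ↔ t ∈ RGammaI n r s := by
  rw [mem_RGammaI_cons,
    show ((0:ℤ), ((r+1:ℕ):ℤ)) + RStep.D.disp = ((1:ℤ), ((r:ℕ):ℤ)) from by
      simp [RStep.disp, Prod.ext_iff],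
    show (((r+1:ℕ):ℤ) + RStep.D.disp.2) = ((r:ℕ):ℤ) from by
      simp [RStep.disp],
    mem_RGammaI_iff]
  constructor
  · rintro ⟨_, h2, h3, h4, _, h6⟩
    obtain ⟨e1, e2⟩ := (tail_shift n s _ t).1 ⟨h3, h4⟩
    exact ⟨h2, e1, e2, h6⟩
  · rintro ⟨h2, h3, h4, h6⟩
    obtain ⟨e1, e2⟩ := (tail_shift n s _ t).2 ⟨h3, h4⟩
    exact ⟨by positivity, h2, e1, e2, by simp, h6⟩

lemma cons_D_not_mem {n s : ℕ} {t : List RStep} :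
    RStep.D :: t ∉ RGammaI (n+1) 0 s := by
  rw [mem_RGammaI_cons]
  rintro ⟨h1, -⟩
  simp [RStep.disp] at h1

lemma cons_V_not_mem {n s : ℕ} {t : List RStep} :
    RStep.V :: t ∉ RGammaI (n+1) 0 s := by
  rw [mem_RGammaI_cons]
  rintro ⟨h1, -⟩
  simp [RStep.disp] at h1

lemma cons_B_not_mem {n r s : ℕ} {t : List RStep} :
    RStep.B :: t ∉ RGammaI (n+1) r s := by
  rw [mem_RGammaI_cons]
  rintro ⟨-, -, -, -, h, -⟩
  exact h rfl

lemma cons_V_mem {n r s : ℕ} {t : List RStep} :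
    RStep.V :: t ∈ RGammaI (n+1) (r+1) s ↔ t ∈ RGammaI (n+1) r s := by
  rw [mem_RGammaI_cons,
    show ((0:ℤ), ((r+1:ℕ):ℤ)) + RStep.V.disp = ((0:ℤ), ((r:ℕ):ℤ)) from by
      simp [RStep.disp, Prod.ext_iff],
    show (((r+1:ℕ):ℤ) + RStep.V.disp.2) = ((r:ℕ):ℤ) from by
      simp [RStep.disp],
    mem_RGammaI_iff]
  rw [show (((n+1:ℕ)):ℤ) = (n:ℤ)+1 from by push_cast; ring]
  constructor
  · rintro ⟨_, h2, h3, h4, _, h6⟩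
    exact ⟨h2, h3, h4, h6⟩
  · rintro ⟨h2, h3, h4, h6⟩
    exact ⟨by positivity, h2, h3, h4, by simp, h6⟩

lemma nil_not_mem_succ {n r s : ℕ} : ([] : List RStep) ∉ RGammaI (n+1) r s := by
  rw [mem_RGammaI_iff]
  rintro ⟨-, he, -, -⟩
  have : (0 : ℤ) = ((n+1 : ℕ) : ℤ) := (Prod.ext_iff.1 he).1
  omega

lemma disj_image {c1 c2 : RStep} (h : c1 ≠ c2) (F G : Finset (List RStep)) :
    Disjoint (F.image (c1 :: ·)) (G.image (c2 :: ·)) := by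
  rw [Finset.disjoint_left]
  rintro x hx hy
  simp only [Finset.mem_image] at hx hy
  obtain ⟨t, -, rfl⟩ := hx
  obtain ⟨t', -, heq⟩ := hy
  injection heq with h1 _
  exact h h1.symm

lemma sum_image_cons (a b lam : ℕ → ℂ) (c : RStep) (F : Finset (List RStep)) (h : ℤ) :
    ∑ p ∈ F.image (c :: ·), pathWt a b lam (fun _ => 0) h p
      = ∑ t ∈ F, stepWt a b lam (fun _ => 0) h c * pathWt a b lam (fun _ => 0) (h + c.disp.2) t := by
  rw [Finset.sum_image (by intro x _ y _ hxy; exact List.tail_eq_of_cons_eq hxy)]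
  rfl

lemma keyB (a b lam : ℕ → ℂ) (s : ℕ) : ∀ n r, ∃ F : Finset (List RStep),
    ↑F = RGammaI n r s ∧
    ∑ p ∈ F, pathWt a b lam (fun _ => 0) (r : ℤ) p = Tfun9 a b lam n r s := by
  intro n
  induction n with
  | zero =>
    intro r
    refine ⟨if r = s then {[]} else ∅, ?_, ?_⟩
    · ext l
      rw [mem_RGammaI_zero]
      by_cases h : r = s <;> simp [h]
    · by_cases h : r = s <;> simp [h, Tfun9, pathWt]
  | succ n ihn =>
    intro r
    induction r with
    | zero =>
      obtain ⟨F1, hF1, hS1⟩ := ihn 1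
      obtain ⟨F0, hF0, hS0⟩ := ihn 0
      refine ⟨F1.image (RStep.U :: ·) ∪ F0.image (RStep.H :: ·), ?_, ?_⟩
      · ext l
        simp only [Finset.coe_union, Set.mem_union, Finset.coe_image, Set.mem_image,
          Finset.mem_coe]
        constructor
        · rintro (⟨t, ht, rfl⟩ | ⟨t, ht, rfl⟩)
          · exact cons_U_mem.2 (by rw [← hF1]; exact ht)
          · exact cons_H_mem.2 (by rw [← hF0]; exact ht)
        · intro hl
          cases l with
          | nil => exact absurd hl nil_not_mem_succ
          | cons st t =>
            cases st with
            | U => exact Or.inl ⟨t, by rw [← Finset.mem_coe, hF1]; exact cons_U_mem.1 hl, rfl⟩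
            | H => exact Or.inr ⟨t, by rw [← Finset.mem_coe, hF0]; exact cons_H_mem.1 hl, rfl⟩
            | D => exact absurd hl cons_D_not_mem
            | V => exact absurd hl cons_V_not_mem
            | B => exact absurd hl cons_B_not_mem
      · have e1 : ∑ t ∈ F1, stepWt a b lam (fun _ => 0) ((0:ℕ):ℤ) RStep.U
              * pathWt a b lam (fun _ => 0) (((0:ℕ):ℤ) + RStep.U.disp.2) t
            = Tfun9 a b lam n 1 s := by
          rw [show ((0:ℕ):ℤ) + RStep.U.disp.2 = ((1:ℕ):ℤ) by simp [RStep.disp]]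
          simp only [stepWt, one_mul]
          exact hS1
        have e0 : ∑ t ∈ F0, stepWt a b lam (fun _ => 0) ((0:ℕ):ℤ) RStep.H
              * pathWt a b lam (fun _ => 0) (((0:ℕ):ℤ) + RStep.H.disp.2) t
            = b 0 * Tfun9 a b lam n 0 s := by
          rw [show ((0:ℕ):ℤ) + RStep.H.disp.2 = ((0:ℕ):ℤ) by simp [RStep.disp]]
          simp only [stepWt]
          rw [show ((0:ℕ):ℤ).toNat = 0 by simp, ← Finset.mul_sum, hS0]
        rw [Finset.sum_union (disj_image (by simp) _ _), sum_image_cons, sum_image_cons, e1, e0]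
        rfl
    | succ r ihr =>
      obtain ⟨FU, hFU, hSU⟩ := ihn (r+2)
      obtain ⟨FH, hFH, hSH⟩ := ihn (r+1)
      obtain ⟨FD, hFD, hSD⟩ := ihn r
      obtain ⟨FV, hFV, hSV⟩ := ihr
      refine ⟨FU.image (RStep.U :: ·) ∪ FH.image (RStep.H :: ·) ∪ FD.image (RStep.D :: ·)
        ∪ FV.image (RStep.V :: ·), ?_, ?_⟩
      · ext l
        simp only [Finset.coe_union, Set.mem_union, Finset.coe_image, Set.mem_image,
          Finset.mem_coe]
        constructor
        · rintro (((⟨t, ht, rfl⟩ | ⟨t, ht, rfl⟩) | ⟨t, ht, rfl⟩) | ⟨t, ht, rfl⟩)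
          · exact cons_U_mem.2 (by rw [← hFU]; exact ht)
          · exact cons_H_mem.2 (by rw [← hFH]; exact ht)
          · exact cons_D_mem.2 (by rw [← hFD]; exact ht)
          · exact cons_V_mem.2 (by rw [← hFV]; exact ht)
        · intro hl
          cases l with
          | nil => exact absurd hl nil_not_mem_succ
          | cons st t =>
            cases st with
            | U => exact Or.inl (Or.inl (Or.inl
                ⟨t, by rw [← Finset.mem_coe, hFU]; exact cons_U_mem.1 hl, rfl⟩))
            | H => exact Or.inl (Or.inl (Or.inr
                ⟨t, by rw [← Finset.mem_coe, hFH]; exact cons_H_mem.1 hl, rfl⟩))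
            | D => exact Or.inl (Or.inr
                ⟨t, by rw [← Finset.mem_coe, hFD]; exact cons_D_mem.1 hl, rfl⟩)
            | V => exact Or.inr ⟨t, by rw [← Finset.mem_coe, hFV]; exact cons_V_mem.1 hl, rfl⟩
            | B => exact absurd hl cons_B_not_mem
      · have eU : ∑ t ∈ FU, stepWt a b lam (fun _ => 0) ((r+1:ℕ):ℤ) RStep.U
              * pathWt a b lam (fun _ => 0) (((r+1:ℕ):ℤ) + RStep.U.disp.2) t
            = Tfun9 a b lam n (r+2) s := by
          rw [show ((r+1:ℕ):ℤ) + RStep.U.disp.2 = ((r+2:ℕ):ℤ) by simp [RStep.disp]; omega]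
          simp only [stepWt, one_mul]
          exact hSU
        have eH : ∑ t ∈ FH, stepWt a b lam (fun _ => 0) ((r+1:ℕ):ℤ) RStep.H
              * pathWt a b lam (fun _ => 0) (((r+1:ℕ):ℤ) + RStep.H.disp.2) t
            = b (r+1) * Tfun9 a b lam n (r+1) s := by
          rw [show ((r+1:ℕ):ℤ) + RStep.H.disp.2 = ((r+1:ℕ):ℤ) by simp [RStep.disp]]
          simp only [stepWt]
          rw [show ((r+1:ℕ):ℤ).toNat = r+1 by simp, ← Finset.mul_sum, hSH]
        have eD : ∑ t ∈ FD, stepWt a b lam (fun _ => 0) ((r+1:ℕ):ℤ) RStep.D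
              * pathWt a b lam (fun _ => 0) (((r+1:ℕ):ℤ) + RStep.D.disp.2) t
            = lam (r+1) * Tfun9 a b lam n r s := by
          rw [show ((r+1:ℕ):ℤ) + RStep.D.disp.2 = ((r:ℕ):ℤ) by simp [RStep.disp]]
          simp only [stepWt]
          rw [show ((r+1:ℕ):ℤ).toNat = r+1 by simp, ← Finset.mul_sum, hSD]
        have eV : ∑ t ∈ FV, stepWt a b lam (fun _ => 0) ((r+1:ℕ):ℤ) RStep.V
              * pathWt a b lam (fun _ => 0) (((r+1:ℕ):ℤ) + RStep.V.disp.2) t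
            = a (r+1) * Tfun9 a b lam (n+1) r s := by
          rw [show ((r+1:ℕ):ℤ) + RStep.V.disp.2 = ((r:ℕ):ℤ) by simp [RStep.disp]]
          simp only [stepWt]
          rw [show ((r+1:ℕ):ℤ).toNat = r+1 by simp, ← Finset.mul_sum, hSV]
        rw [Finset.sum_union (by
            refine Finset.disjoint_union_left.2 ⟨Finset.disjoint_union_left.2 ⟨?_, ?_⟩, ?_⟩ <;>
              exact disj_image (by simp) _ _),
          Finset.sum_union (Finset.disjoint_union_left.2
            ⟨disj_image (by simp) _ _, disj_image (by simp) _ _⟩),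
          Finset.sum_union (disj_image (by simp) _ _),
          sum_image_cons, sum_image_cons, sum_image_cons, sum_image_cons, eU, eH, eD, eV]
        show _ = Tstep9 a b lam (Tfun9 a b lam n) (r+1) s
        rw [Tstep9]
        rfl


end AuxStmt9

/-- Let `(a_i), (b_i), (λ_i)` be complex sequences with `a_n ≠ 0` and
`P_n(−λ_n/a_n) ≠ 0` for `n ≥ 1`, where the `P_n` are the type `R_I` orthogonal
polynomials (the recurrence with `c_i = 0`). If `τ` has finite support in `s` and
satisfies the expansion `x^n P_r = Σ_{s≥0} τ_{n,r,s} P_s`, then for all `n, r, s ≥ 0`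
the set `RΓ^I_{n,r,s}` is finite and `τ_{n,r,s} = Σ_{p∈RΓ^I_{n,r,s}} wt(p)`. -/
theorem stmt9 (a b lam : ℕ → ℂ)
    (ha : ∀ n : ℕ, 1 ≤ n → a n ≠ 0)
    (hP : ∀ n : ℕ, 1 ≤ n →
      Polynomial.eval (-lam n / a n) (Ppoly a b lam (fun _ => 0) n) ≠ 0)
    (τ : ℕ → ℕ → ℕ → ℂ)
    (hfin : ∀ n r : ℕ, {s : ℕ | τ n r s ≠ 0}.Finite)
    (hexp : ∀ n r : ℕ, (X ^ n * Ppoly a b lam (fun _ => 0) r : Polynomial ℂ) =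
      ∑ᶠ s : ℕ, C (τ n r s) * Ppoly a b lam (fun _ => 0) s)
    (n r s : ℕ) :
    (RGammaI n r s).Finite ∧
      τ n r s = ∑' p : RGammaI n r s, pathWt a b lam (fun _ => 0) (r : ℤ) p.1 := by
  obtain ⟨F, hF, hS⟩ := keyB a b lam s n r
  constructor
  · rw [← hF]
    exact F.finite_toSet
  · rw [tau_eq_Tfun9 a b lam τ hfin hexp n r s, ← hS, ← hF]
    exact (Finset.tsum_subtype' F _).symm
end

section
/- For nonnegative integers n, i, j, k, the set of R_II paths from (0,0) to (n,0) having exactly i D steps, exactly j V steps, and exactly k B steps is finite; if 2i + j ≤ n its cardinality equals C_{i+j+k} · binom(n+j+2k, n−2i−j) · binom(i+j+k, j) · binom(i+k, i), where C_N = binom(2N, N)/(N+1) is the N-th Catalan number, and if 2i + j > n the set is empty. -/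
open Polynomial

/-- The set of `R_II` paths from `(0,0)` to `(n,0)` with exactly `i` down steps,
`j` vertical-down steps, and `k` backward-down steps. -/
def GammaCount (n i j k : ℕ) : Set (List RStep) :=
  {l | l ∈ Gamma n 0 0 ∧ l.count RStep.D = i ∧ l.count RStep.V = j ∧ l.count RStep.B = k}


namespace RAux
variable {α : Type*}

/-- Interleave: `false` positions get the default `d`, `true` positions pop from `xs`. -/
def mrg (d : α) : List Bool → List α → List α
  | [], _ => []
  | false :: m, xs => d :: mrg d m xs
  | true :: _, [] => []
  | true :: m, x :: xs => x :: mrg d m xs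

theorem mrg_map {p : α → Bool} {d : α} (hd : p d = false) :
    ∀ (m : List Bool) (xs : List α), (∀ x ∈ xs, p x = true) → m.count true = xs.length →
      (mrg d m xs).map p = m := by
  intro m
  induction m with
  | nil => intro xs _ _; simp [mrg]
  | cons b m ih =>
    intro xs hxs hc
    simp [List.count_cons] at hc
    cases b with
    | false => simp [mrg, hd, ih xs hxs (by simpa using hc)]
    | true =>
      cases xs with
      | nil => simp at hc
      | cons x xs =>
        simp at hc
        simp [mrg, hxs x (by simp), ih xs (fun y hy => hxs y (by simp [hy])) (by omega)]

theorem mrg_filter {p : α → Bool} {d : α} (hd : p d = false) :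
    ∀ (m : List Bool) (xs : List α), (∀ x ∈ xs, p x = true) → m.count true = xs.length →
      (mrg d m xs).filter p = xs := by
  intro m
  induction m with
  | nil => intro xs _ hc; simp at hc; simp [mrg, List.length_eq_zero_iff.mp hc.symm]
  | cons b m ih =>
    intro xs hxs hc
    simp [List.count_cons] at hc
    cases b with
    | false => simp [mrg, List.filter_cons, hd, ih xs hxs (by simpa using hc)]
    | true =>
      cases xs with
      | nil => simp at hc
      | cons x xs =>
        simp at hc
        simp [mrg, List.filter_cons, hxs x (by simp),
          ih xs (fun y hy => hxs y (by simp [hy])) (by omega)]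

theorem mrg_self {p : α → Bool} {d : α} :
    ∀ (l : List α), (∀ x ∈ l, p x = false → x = d) → mrg d (l.map p) (l.filter p) = l := by
  intro l
  induction l with
  | nil => simp [mrg]
  | cons x l ih =>
    intro hl
    rcases hb : p x with _ | _
    · have hx : x = d := hl x (by simp) hb
      subst hx
      simp [mrg, hb, List.filter_cons, ih (fun y hy => hl y (by simp [hy]))]
    · simp [mrg, hb, List.filter_cons, ih (fun y hy => hl y (by simp [hy]))]

theorem mem_mrg {d : α} : ∀ {m : List Bool} {xs : List α} {x : α},
    x ∈ mrg d m xs → x = d ∨ x ∈ xs := by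
  intro m
  induction m with
  | nil => intro xs x hx; simp [mrg] at hx
  | cons b m ih =>
    intro xs x hx
    cases b with
    | false =>
      rcases List.mem_cons.mp hx with h | hx
      · exact Or.inl h
      · exact (ih hx).imp id id
    | true =>
      cases xs with
      | nil => simp [mrg] at hx
      | cons y xs =>
        rcases List.mem_cons.mp hx with h | hx
        · exact Or.inr (by simp [h])
        · exact (ih hx).imp id (by simp +contextual)

theorem mrg_count_d [DecidableEq α] {p : α → Bool} {d : α} (hd : p d = false) :
    ∀ (m : List Bool) (xs : List α), (∀ x ∈ xs, p x = true) → m.count true = xs.length →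
      (mrg d m xs).count d = m.count false := by
  intro m
  induction m with
  | nil => intro xs _ _; simp [mrg]
  | cons b m ih =>
    intro xs hxs hc
    simp [List.count_cons] at hc
    cases b with
    | false => simp [mrg, List.count_cons, ih xs hxs (by simpa using hc)]
    | true =>
      cases xs with
      | nil => simp at hc
      | cons x xs =>
        simp at hc
        have hxd : ¬ (x = d) := fun h => by
          have := hxs x (by simp); rw [h, hd] at this; exact Bool.false_ne_true this
        simp [mrg, List.count_cons, ih xs (fun y hy => hxs y (by simp [hy])) (by omega),
          Ne.symm hxd, hxd]

theorem bool_count (m : List Bool) : m.count true + m.count false = m.length := by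
  induction m with
  | nil => simp
  | cons b m ih => cases b <;> simp [List.count_cons] <;> omega

theorem count_true_map (f : α → Bool) (l : List α) :
    (l.map f).count true = l.countP f := by
  induction l with
  | nil => simp
  | cons x l ih => rcases h : f x with _ | _ <;> simp [List.count_cons, List.countP_cons, h, ih]


/-- prefix sums of `g`, offset by `c`, are all nonnegative -/
def pfx (c : ℤ) (g : List ℤ) : Prop := ∀ t, 0 ≤ c + (g.take t).sum

theorem pfx_nonneg {c g} (h : pfx c g) : 0 ≤ c := by simpa using h 0

theorem pfx_cons {c x g} : pfx c (x :: g) ↔ 0 ≤ c ∧ pfx (c + x) g := by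
  constructor
  · intro h
    refine ⟨pfx_nonneg h, fun t => ?_⟩
    have := h (t + 1)
    simpa [add_assoc] using this
  · rintro ⟨h0, h⟩ t
    cases t with
    | zero => simpa using h0
    | succ t => have := h t; simpa [add_assoc] using this

theorem pfx_filter : ∀ (g : List ℤ) (c : ℤ),
    pfx c g ↔ pfx c (g.filter (fun x => decide (x ≠ 0))) := by
  intro g
  induction g with
  | nil => intro c; simp
  | cons x g ih =>
    intro c
    by_cases hx : x = 0
    · subst hx
      rw [show ((0:ℤ) :: g).filter (fun x => decide (x ≠ 0)) =
          g.filter (fun x => decide (x ≠ 0)) by simp]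
      rw [pfx_cons, add_zero, ih]
      exact ⟨fun h => h.2, fun h => ⟨pfx_nonneg h, h⟩⟩
    · rw [show (x :: g).filter (fun x => decide (x ≠ 0)) =
          x :: g.filter (fun x => decide (x ≠ 0)) by simp [hx]]
      rw [pfx_cons, pfx_cons, ih]

/-- lists of `Bool` of length `a` with `b` `true`s -/
def BL (a b : ℕ) : Set (List Bool) := {v | v.length = a ∧ v.count true = b}

theorem BL_finite (a b : ℕ) : (BL a b).Finite :=
  (List.finite_length_eq Bool a).subset fun _ hv => hv.1

theorem ncard_BL : ∀ a b : ℕ, (BL a b).ncard = a.choose b := by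
  intro a
  induction a with
  | zero =>
    intro b
    cases b with
    | zero =>
      have : BL 0 0 = {([] : List Bool)} := by
        ext v; simp [BL, List.length_eq_zero_iff]
        rintro rfl; simp
      rw [this, Set.ncard_singleton]; rfl
    | succ b =>
      have : BL 0 (b+1) = ∅ := by
        ext v; simp [BL, List.length_eq_zero_iff]
        rintro rfl; simp
      simp [this]
  | succ a ih =>
    intro b
    cases b with
    | zero =>
      have : BL (a+1) 0 = (List.cons false) '' BL a 0 := by
        ext v
        constructor
        · rintro ⟨hl, hc⟩
          cases v with
          | nil => simp at hl
          | cons x t =>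
            rcases x with _ | _
            · exact ⟨t, ⟨by simpa using hl, by simpa [List.count_cons] using hc⟩, rfl⟩
            · exfalso; simp [List.count_cons] at hc
        · rintro ⟨t, ⟨hl, hc⟩, rfl⟩
          exact ⟨by simp [hl], by simp [List.count_cons, hc]⟩
      rw [this, Set.ncard_image_of_injective _ (List.cons_injective), ih]
      simp
    | succ b =>
      have : BL (a+1) (b+1) =
          (List.cons false) '' BL a (b+1) ∪ (List.cons true) '' BL a b := by
        ext v
        constructor
        · rintro ⟨hl, hc⟩
          cases v with
          | nil => simp at hl
          | cons x t =>
            rcases x with _ | _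
            · exact Or.inl ⟨t, ⟨by simpa using hl, by simpa [List.count_cons] using hc⟩, rfl⟩
            · exact Or.inr ⟨t, ⟨by simpa using hl, by
                have := hc; simp [List.count_cons] at this ⊢; omega⟩, rfl⟩
        · rintro (⟨t, ⟨hl, hc⟩, rfl⟩ | ⟨t, ⟨hl, hc⟩, rfl⟩) <;>
            exact ⟨by simp [hl], by simp [List.count_cons, hc]⟩
      rw [this, Set.ncard_union_eq ?dis ?f1 ?f2]
      case dis =>
        rw [Set.disjoint_left]
        rintro v ⟨t, _, rfl⟩ ⟨t', _, h⟩
        simp at h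
      case f1 => exact ((BL_finite a (b+1)).image _)
      case f2 => exact ((BL_finite a b).image _)
      rw [Set.ncard_image_of_injective _ (List.cons_injective),
        Set.ncard_image_of_injective _ (List.cons_injective), ih, ih,
        Nat.choose_succ_succ]
      simp only [Nat.succ_eq_add_one]
      omega


end RAux

namespace RAux

def notH : RStep → Bool | .H => false | _ => true
def notU : RStep → Bool | .U => false | _ => true
def notV : RStep → Bool | .V => false | _ => true
def isB  : RStep → Bool | .B => true  | _ => false
def bToD : Bool → DyckStep | false => .U | true => .D
def dToB : DyckStep → Bool | .U => false | .D => true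
def bToR : Bool → RStep | true => .B | false => .D

theorem dToB_inj : Function.Injective dToB := by
  intro a b h; cases a <;> cases b <;> simp [dToB] at h ⊢
theorem bToD_inj : Function.Injective bToD := by
  intro a b h; cases a <;> cases b <;> simp [bToD] at h ⊢
theorem bToR_inj : Function.Injective bToR := by
  intro a b h; cases a <;> cases b <;> simp [bToR] at h ⊢

theorem len_counts (l : List RStep) :
    l.length = l.count .U + l.count .H + l.count .D + l.count .V + l.count .B := by
  induction l with
  | nil => simp
  | cons x l ih => cases x <;> simp [List.count_cons, ih] <;> omega

theorem countP_notH (l : List RStep) : l.countP notH + l.count .H = l.length := by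
  induction l with
  | nil => simp
  | cons x l ih => cases x <;> simp [List.count_cons, List.countP_cons, notH] <;> omega

theorem countP_notU (l : List RStep) : l.countP notU + l.count .U = l.length := by
  induction l with
  | nil => simp
  | cons x l ih => cases x <;> simp [List.count_cons, List.countP_cons, notU] <;> omega

theorem countP_notV (l : List RStep) : l.countP notV + l.count .V = l.length := by
  induction l with
  | nil => simp
  | cons x l ih => cases x <;> simp [List.count_cons, List.countP_cons, notV] <;> omega

theorem countP_isB (l : List RStep) : l.countP isB = l.count .B := by
  induction l with
  | nil => simp
  | cons x l ih => cases x <;> simp [List.count_cons, List.countP_cons, isB, ih]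

theorem endPt_eq (l : List RStep) : ∀ s : ℤ × ℤ,
    endPt s l = (s.1 + l.count .U + l.count .H + l.count .D - l.count .B,
                 s.2 + l.count .U - l.count .D - l.count .V - l.count .B) := by
  induction l with
  | nil => intro s; simp [endPt]
  | cons x l ih =>
    intro s
    rw [show endPt s (x :: l) = endPt (s + x.disp) l from rfl, ih]
    cases x <;> simp [RStep.disp, List.count_cons, Prod.ext_iff] <;> push_cast <;> omega

theorem heights_iff (l : List RStep) : ∀ h : ℤ, 0 ≤ h →
    (heightsNonneg h l ↔ pfx h (l.map (fun s => s.disp.2))) := by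
  induction l with
  | nil =>
    intro h h0
    constructor
    · intro _ t; simpa using h0
    · intro _; trivial
  | cons x l ih =>
    intro h h0
    rw [show heightsNonneg h (x :: l) = (0 ≤ h + x.disp.2 ∧ heightsNonneg (h + x.disp.2) l)
      from rfl]
    rw [List.map_cons, pfx_cons]
    constructor
    · rintro ⟨h1, h2⟩; exact ⟨h0, (ih _ h1).mp h2⟩
    · rintro ⟨-, h2⟩
      have h1 : 0 ≤ h + x.disp.2 := pfx_nonneg h2
      exact ⟨h1, (ih _ h1).mpr h2⟩

theorem disp2_filter (l : List RStep) :
    (l.map (fun s => s.disp.2)).filter (fun x => decide (x ≠ 0)) =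
      (l.filter notH).map (fun s => s.disp.2) := by
  induction l with
  | nil => simp
  | cons x l ih => cases x <;> simp [RStep.disp, notH, List.filter_cons] <;> simpa [RStep.disp] using ih

theorem disp2_eq_pm (l : List RStep) (hl : ∀ x ∈ l, notH x = true) :
    l.map (fun s => s.disp.2) = (l.map notU).map (fun b => bif b then (-1:ℤ) else 1) := by
  induction l with
  | nil => simp
  | cons x l ih =>
    have hx := hl x (by simp)
    have ht := ih (fun y hy => hl y (by simp [hy]))
    rcases x with _|_|_|_|_
    · simp only [List.map_cons, ht, notU]; rfl
    · simp [notH] at hx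
    · simp only [List.map_cons, ht, notU]; rfl
    · simp only [List.map_cons, ht, notU]; rfl
    · simp only [List.map_cons, ht, notU]; rfl

theorem sum_pm (mm : List Bool) :
    ((mm.map (fun b => bif b then (-1:ℤ) else 1)).sum) =
      (mm.count false : ℤ) - mm.count true := by
  induction mm with
  | nil => simp
  | cons b mm ih => cases b <;> simp [List.count_cons, ih] <;> push_cast <;> ring

theorem pfx_iff_counts (mm : List Bool) :
    pfx 0 (mm.map (fun b => bif b then (-1:ℤ) else 1)) ↔
      ∀ t, (mm.take t).count true ≤ (mm.take t).count false := by
  unfold pfx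
  constructor
  · intro h t; have := h t; rw [← List.map_take, sum_pm] at this; omega
  · intro h t; have := h t; rw [← List.map_take, sum_pm]; omega

theorem heights_iff_counts (l : List RStep) :
    heightsNonneg 0 l ↔
      ∀ t, (((l.filter notH).map notU).take t).count true ≤
        (((l.filter notH).map notU).take t).count false := by
  rw [heights_iff l 0 le_rfl, pfx_filter, disp2_filter,
    disp2_eq_pm (l.filter notH) (fun x hx => (List.mem_filter.mp hx).2), pfx_iff_counts]

end RAux

namespace RAux

instance : Fintype RStep :=
  Fintype.ofList [.U, .H, .D, .V, .B] (fun x => by cases x <;> simp)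

theorem count_true_dToB (dl : List DyckStep) : (dl.map dToB).count true = dl.count .D := by
  simpa [dToB] using (List.count_map_of_injective dl dToB dToB_inj .D)

theorem count_false_dToB (dl : List DyckStep) : (dl.map dToB).count false = dl.count .U := by
  simpa [dToB] using (List.count_map_of_injective dl dToB dToB_inj .U)

theorem count_true_bToD (mm : List Bool) : (mm.map bToD).count .D = mm.count true := by
  simpa [bToD] using (List.count_map_of_injective mm bToD bToD_inj true)

theorem count_false_bToD (mm : List Bool) : (mm.map bToD).count .U = mm.count false := by
  simpa [bToD] using (List.count_map_of_injective mm bToD bToD_inj false)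

/-- decodes (dyck word, H-mask, non-V-mask, B-mask) to a path -/
def dec (dl : List DyckStep) (m1 m3 m4 : List Bool) : List RStep :=
  mrg .H m1 (mrg .U (dl.map dToB) (mrg .V m3 (m4.map bToR)))

theorem rst_mem {m4 : List Bool} : ∀ x ∈ m4.map bToR, x = RStep.D ∨ x = RStep.B := by
  intro x hx
  obtain ⟨b, -, rfl⟩ := List.mem_map.mp hx
  cases b <;> simp [bToR]

theorem rst_notV {m4 : List Bool} : ∀ x ∈ m4.map bToR, notV x = true := by
  intro x hx; rcases rst_mem x hx with rfl | rfl <;> rfl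

theorem dns_map {m3 m4 : List Bool} (H3 : m3.count true = m4.length) :
    (mrg .V m3 (m4.map bToR)).map notV = m3 :=
  mrg_map rfl m3 _ rst_notV (by simpa using H3)

theorem dns_filter {m3 m4 : List Bool} (H3 : m3.count true = m4.length) :
    (mrg .V m3 (m4.map bToR)).filter notV = m4.map bToR :=
  mrg_filter rfl m3 _ rst_notV (by simpa using H3)

theorem dns_len {m3 m4 : List Bool} (H3 : m3.count true = m4.length) :
    (mrg .V m3 (m4.map bToR)).length = m3.length := by
  have := congrArg List.length (dns_map H3)
  simpa using this

theorem dns_mem {m3 m4 : List Bool} :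
    ∀ x ∈ mrg RStep.V m3 (m4.map bToR), x = RStep.V ∨ x = RStep.D ∨ x = RStep.B := by
  intro x hx
  rcases mem_mrg hx with rfl | hx
  · exact Or.inl rfl
  · exact Or.inr (rst_mem x hx)

theorem dns_notU {m3 m4 : List Bool} : ∀ x ∈ mrg RStep.V m3 (m4.map bToR), notU x = true := by
  intro x hx; rcases dns_mem x hx with rfl | rfl | rfl <;> rfl

theorem dns_notH {m3 m4 : List Bool} : ∀ x ∈ mrg RStep.V m3 (m4.map bToR), notH x = true := by
  intro x hx; rcases dns_mem x hx with rfl | rfl | rfl <;> rfl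

theorem vst_count {dl : List DyckStep} {m3 m4 : List Bool} (H3 : m3.count true = m4.length)
    (HD : dl.count .D = m3.length) :
    (dl.map dToB).count true = (mrg RStep.V m3 (m4.map bToR)).length := by
  rw [count_true_dToB, HD, dns_len H3]

theorem vst_map {dl : List DyckStep} {m3 m4 : List Bool} (H3 : m3.count true = m4.length)
    (HD : dl.count .D = m3.length) :
    (mrg .U (dl.map dToB) (mrg .V m3 (m4.map bToR))).map notU = dl.map dToB :=
  mrg_map rfl _ _ dns_notU (vst_count H3 HD)

theorem vst_filter {dl : List DyckStep} {m3 m4 : List Bool} (H3 : m3.count true = m4.length)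
    (HD : dl.count .D = m3.length) :
    (mrg .U (dl.map dToB) (mrg .V m3 (m4.map bToR))).filter notU = mrg .V m3 (m4.map bToR) :=
  mrg_filter rfl _ _ dns_notU (vst_count H3 HD)

theorem vst_len {dl : List DyckStep} {m3 m4 : List Bool} (H3 : m3.count true = m4.length)
    (HD : dl.count .D = m3.length) :
    (mrg .U (dl.map dToB) (mrg .V m3 (m4.map bToR))).length = dl.length := by
  have := congrArg List.length (vst_map H3 HD)
  simpa using this

theorem vst_notH {dl : List DyckStep} {m3 m4 : List Bool} :
    ∀ x ∈ mrg RStep.U (dl.map dToB) (mrg RStep.V m3 (m4.map bToR)), notH x = true := by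
  intro x hx
  rcases mem_mrg hx with rfl | hx
  · rfl
  · exact dns_notH x hx

section decfacts

variable {dl : List DyckStep} {m1 m3 m4 : List Bool}

theorem dec_map (H3 : m3.count true = m4.length) (HD : dl.count .D = m3.length)
    (H1 : m1.count true = dl.length) : (dec dl m1 m3 m4).map notH = m1 :=
  mrg_map rfl _ _ vst_notH (by rw [H1, vst_len H3 HD])

theorem dec_filter (H3 : m3.count true = m4.length) (HD : dl.count .D = m3.length)
    (H1 : m1.count true = dl.length) :
    (dec dl m1 m3 m4).filter notH = mrg .U (dl.map dToB) (mrg .V m3 (m4.map bToR)) :=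
  mrg_filter rfl _ _ vst_notH (by rw [H1, vst_len H3 HD])

theorem dec_len (H3 : m3.count true = m4.length) (HD : dl.count .D = m3.length)
    (H1 : m1.count true = dl.length) : (dec dl m1 m3 m4).length = m1.length := by
  have := congrArg List.length (dec_map H3 HD H1)
  simpa using this

theorem dec_count_H (H3 : m3.count true = m4.length) (HD : dl.count .D = m3.length)
    (H1 : m1.count true = dl.length) : (dec dl m1 m3 m4).count .H = m1.count false :=
  mrg_count_d rfl _ _ vst_notH (by rw [H1, vst_len H3 HD])

theorem dec_count_vs (H3 : m3.count true = m4.length) (HD : dl.count .D = m3.length)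
    (H1 : m1.count true = dl.length) (x : RStep) (hx : notH x = true) :
    (dec dl m1 m3 m4).count x
      = (mrg .U (dl.map dToB) (mrg .V m3 (m4.map bToR))).count x :=
  calc (dec dl m1 m3 m4).count x = ((dec dl m1 m3 m4).filter notH).count x :=
        (List.count_filter hx).symm
    _ = _ := by rw [dec_filter H3 HD H1]

theorem dec_count_U (H3 : m3.count true = m4.length) (HD : dl.count .D = m3.length)
    (H1 : m1.count true = dl.length) : (dec dl m1 m3 m4).count .U = dl.count .U := by
  rw [dec_count_vs H3 HD H1 .U rfl,
    mrg_count_d rfl _ _ dns_notU (vst_count H3 HD), count_false_dToB]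

theorem dec_count_dns (H3 : m3.count true = m4.length) (HD : dl.count .D = m3.length)
    (H1 : m1.count true = dl.length) (x : RStep) (hx : notH x = true) (hx' : notU x = true) :
    (dec dl m1 m3 m4).count x = (mrg .V m3 (m4.map bToR)).count x :=
  calc (dec dl m1 m3 m4).count x
      = (mrg .U (dl.map dToB) (mrg .V m3 (m4.map bToR))).count x := dec_count_vs H3 HD H1 x hx
    _ = ((mrg .U (dl.map dToB) (mrg .V m3 (m4.map bToR))).filter notU).count x :=
        (List.count_filter hx').symm
    _ = _ := by rw [vst_filter H3 HD]

theorem dec_count_V (H3 : m3.count true = m4.length) (HD : dl.count .D = m3.length)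
    (H1 : m1.count true = dl.length) : (dec dl m1 m3 m4).count .V = m3.count false := by
  rw [dec_count_dns H3 HD H1 .V rfl rfl, mrg_count_d rfl _ _ rst_notV (by simpa using H3)]

theorem dec_count_rst (H3 : m3.count true = m4.length) (HD : dl.count .D = m3.length)
    (H1 : m1.count true = dl.length) (x : RStep) (hx : notH x = true) (hx' : notU x = true)
    (hx'' : notV x = true) : (dec dl m1 m3 m4).count x = (m4.map bToR).count x :=
  calc (dec dl m1 m3 m4).count x
      = (mrg .V m3 (m4.map bToR)).count x := dec_count_dns H3 HD H1 x hx hx'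
    _ = ((mrg .V m3 (m4.map bToR)).filter notV).count x := (List.count_filter hx'').symm
    _ = _ := by rw [dns_filter H3]

theorem dec_count_D (H3 : m3.count true = m4.length) (HD : dl.count .D = m3.length)
    (H1 : m1.count true = dl.length) : (dec dl m1 m3 m4).count .D = m4.count false := by
  rw [dec_count_rst H3 HD H1 .D rfl rfl rfl]
  simpa [bToR] using (List.count_map_of_injective m4 bToR bToR_inj false)

theorem dec_count_B (H3 : m3.count true = m4.length) (HD : dl.count .D = m3.length)
    (H1 : m1.count true = dl.length) : (dec dl m1 m3 m4).count .B = m4.count true := by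
  rw [dec_count_rst H3 HD H1 .B rfl rfl rfl]
  simpa [bToR] using (List.count_map_of_injective m4 bToR bToR_inj true)

theorem dec_heights (H3 : m3.count true = m4.length) (HD : dl.count .D = m3.length)
    (H1 : m1.count true = dl.length)
    (hw : ∀ t, (dl.take t).count .D ≤ (dl.take t).count .U) :
    heightsNonneg 0 (dec dl m1 m3 m4) := by
  rw [heights_iff_counts, dec_filter H3 HD H1, vst_map H3 HD]
  intro t
  rw [← List.map_take, count_true_dToB, count_false_dToB]
  exact hw t

end decfacts

end RAux

namespace RAux

theorem dec_mem {n i j k : ℕ} (h2 : 2*i+j ≤ n) (w : DyckWord) (hw : w.semilength = i+j+k)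
    {m1 m3 m4 : List Bool}
    (h1l : m1.length = n+j+2*k) (h1c : m1.count true = 2*(i+j+k))
    (h3l : m3.length = i+j+k) (h3c : m3.count true = i+k)
    (h4l : m4.length = i+k) (h4c : m4.count true = k) :
    dec w.toList m1 m3 m4 ∈ GammaCount n i j k := by
  have H3 : m3.count true = m4.length := by rw [h3c, h4l]
  have hsl : w.toList.count DyckStep.U = i+j+k := hw
  have HD : w.toList.count .D = m3.length := by
    rw [← w.count_U_eq_count_D, hsl, h3l]
  have H1 : m1.count true = w.toList.length := by
    rw [h1c, ← w.two_mul_semilength_eq_length, hw]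
  have hU : (dec w.toList m1 m3 m4).count .U = i+j+k := by
    rw [dec_count_U H3 HD H1, hsl]
  have hHc : (dec w.toList m1 m3 m4).count .H = n-2*i-j := by
    rw [dec_count_H H3 HD H1]
    have := bool_count m1
    omega
  have hD : (dec w.toList m1 m3 m4).count .D = i := by
    rw [dec_count_D H3 HD H1]
    have := bool_count m4
    omega
  have hV : (dec w.toList m1 m3 m4).count .V = j := by
    rw [dec_count_V H3 HD H1]
    have := bool_count m3
    omega
  have hB : (dec w.toList m1 m3 m4).count .B = k := by
    rw [dec_count_B H3 HD H1, h4c]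
  refine ⟨⟨?_, ?_⟩, hD, hV, hB⟩
  · rw [show ((0:ℕ):ℤ) = 0 from Nat.cast_zero]
    exact dec_heights H3 HD H1 w.count_D_le_count_U
  · rw [endPt_eq, Prod.ext_iff]
    simp only [Nat.cast_zero]
    rw [hU, hHc, hD, hV, hB]
    constructor <;> push_cast <;> omega

theorem mem_char {n i j k : ℕ} {l : List RStep} (hl : l ∈ GammaCount n i j k) :
    2*i+j ≤ n ∧ l.count .U = i+j+k ∧ l.count .H = n-2*i-j ∧ l.length = n+j+2*k := by
  obtain ⟨⟨hh, he⟩, hD, hV, hB⟩ := hl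
  rw [endPt_eq, Prod.ext_iff] at he
  obtain ⟨e1, e2⟩ := he
  simp only [Nat.cast_zero] at e1 e2
  have hlen := len_counts l
  refine ⟨by omega, by omega, by omega, by omega⟩

theorem dec_enc (l : List RStep) :
    dec (((l.filter notH).map notU).map bToD) (l.map notH)
        (((l.filter notH).filter notU).map notV)
        ((((l.filter notH).filter notU).filter notV).map isB) = l := by
  unfold dec
  have h4 : (((((l.filter notH).filter notU).filter notV).map isB).map bToR)
      = ((l.filter notH).filter notU).filter notV := by
    rw [List.map_map]
    have hmem : ∀ x ∈ ((l.filter notH).filter notU).filter notV, (bToR ∘ isB) x = x := by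
      intro x hx
      have h1 := (List.mem_filter.mp hx).2
      have hx2 := (List.mem_filter.mp hx).1
      have hh2 := (List.mem_filter.mp hx2).2
      have hh3 := (List.mem_filter.mp (List.mem_filter.mp hx2).1).2
      cases x <;> simp_all [notH, notU, notV, isB, bToR]
    rw [List.map_congr_left hmem, List.map_id']
  rw [h4]
  rw [mrg_self ((l.filter notH).filter notU)
    (fun x _ hfx => by cases x <;> simp_all [notV])]
  have h2 : ((((l.filter notH).map notU).map bToD).map dToB) = (l.filter notH).map notU := by
    rw [List.map_map, show dToB ∘ bToD = id from funext (fun b => by cases b <;> rfl),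
      List.map_id]
  rw [h2]
  rw [mrg_self (l.filter notH) (fun x _ hfx => by cases x <;> simp_all [notU])]
  rw [mrg_self l (fun x _ hfx => by cases x <;> simp_all [notH])]

end RAux

namespace RAux

/-- The parameter space for decoding. -/
def TT (n i j k : ℕ) : Type :=
  {w : DyckWord // w.semilength = i+j+k} × ↥(BL (n+j+2*k) (2*(i+j+k))) ×
    ↥(BL (i+j+k) (i+k)) × ↥(BL (i+k) k)

def decT (n i j k : ℕ) (h2 : 2*i+j ≤ n) : TT n i j k → ↥(GammaCount n i j k) :=
  fun x =>
    match x with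
    | ⟨⟨w, hw⟩, ⟨v1, h1l, h1c⟩, ⟨v3, h3l, h3c⟩, ⟨v4, h4l, h4c⟩⟩ =>
      ⟨dec w.toList v1 v3 v4, dec_mem h2 w hw h1l h1c h3l h3c h4l h4c⟩

theorem decT_inj (n i j k : ℕ) (h2 : 2*i+j ≤ n) : Function.Injective (decT n i j k h2) := by
  rintro ⟨⟨w, hw⟩, ⟨v1, h1l, h1c⟩, ⟨v3, h3l, h3c⟩, ⟨v4, h4l, h4c⟩⟩
    ⟨⟨w', hw'⟩, ⟨v1', h1l', h1c'⟩, ⟨v3', h3l', h3c'⟩, ⟨v4', h4l', h4c'⟩⟩ h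
  simp only [decT, Subtype.mk.injEq] at h
  have H3 : v3.count true = v4.length := by rw [h3c, h4l]
  have HD : w.toList.count .D = v3.length := by
    rw [← w.count_U_eq_count_D, show w.toList.count DyckStep.U = w.semilength from rfl, hw, h3l]
  have H1 : v1.count true = w.toList.length := by
    rw [h1c, ← w.two_mul_semilength_eq_length, hw]
  have H3' : v3'.count true = v4'.length := by rw [h3c', h4l']
  have HD' : w'.toList.count .D = v3'.length := by
    rw [← w'.count_U_eq_count_D, show w'.toList.count DyckStep.U = w'.semilength from rfl,
      hw', h3l']
  have H1' : v1'.count true = w'.toList.length := by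
    rw [h1c', ← w'.two_mul_semilength_eq_length, hw']
  have e1 : v1 = v1' := by rw [← dec_map H3 HD H1, ← dec_map H3' HD' H1', h]
  have evs := congrArg (List.filter notH) h
  rw [dec_filter H3 HD H1, dec_filter H3' HD' H1'] at evs
  have edm : w.toList.map dToB = w'.toList.map dToB := by
    rw [← vst_map H3 HD, ← vst_map H3' HD', evs]
  have ew : w = w' := DyckWord.ext (List.map_injective_iff.mpr dToB_inj edm)
  have edns := congrArg (List.filter notU) evs
  rw [vst_filter H3 HD, vst_filter H3' HD'] at edns
  have e3 : v3 = v3' := by rw [← dns_map (m4 := v4) H3, ← dns_map (m4 := v4') H3', edns]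
  have erest := congrArg (List.filter notV) edns
  rw [dns_filter H3, dns_filter H3'] at erest
  have e4 : v4 = v4' := List.map_injective_iff.mpr bToR_inj erest
  subst e1 e3 e4 ew
  rfl

theorem decT_surj (n i j k : ℕ) (h2 : 2*i+j ≤ n) : Function.Surjective (decT n i j k h2) := by
  rintro ⟨l, hl⟩
  obtain ⟨-, hU, hH, hlen⟩ := mem_char hl
  obtain ⟨⟨hh0, -⟩, hD, hV, hB⟩ := hl
  rw [Nat.cast_zero] at hh0
  have hcPH := countP_notH l
  have hvslen : (l.filter notH).length = 2*(i+j+k) := by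
    rw [← List.countP_eq_length_filter]; omega
  have hUvs : (l.filter notH).count .U = i+j+k := by rw [List.count_filter rfl, hU]
  have hVvs : (l.filter notH).count .V = j := by rw [List.count_filter rfl, hV]
  have hBvs : (l.filter notH).count .B = k := by rw [List.count_filter rfl, hB]
  have hDvs : (l.filter notH).count .D = i := by rw [List.count_filter rfl, hD]
  have hcPU := countP_notU (l.filter notH)
  have hdmc : ((l.filter notH).map notU).count true = i+j+k := by
    rw [count_true_map]; omega
  have hdml : ((l.filter notH).map notU).length = 2*(i+j+k) := by
    rw [List.length_map]; exact hvslen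
  have hdlD : (((l.filter notH).map notU).map bToD).count .D = i+j+k := by
    rw [count_true_bToD]; exact hdmc
  have hdlU : (((l.filter notH).map notU).map bToD).count .U = i+j+k := by
    rw [count_false_bToD]
    have := bool_count ((l.filter notH).map notU)
    omega
  have hpre : ∀ t, ((((l.filter notH).map notU).map bToD).take t).count .D
      ≤ ((((l.filter notH).map notU).map bToD).take t).count .U := by
    intro t
    have hct := (heights_iff_counts l).mp hh0 t
    rw [← List.map_take, count_true_bToD, count_false_bToD]
    exact hct
  have hdnslen : ((l.filter notH).filter notU).length = i+j+k := by
    rw [← List.countP_eq_length_filter]; omega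
  have hVdns : ((l.filter notH).filter notU).count .V = j := by
    rw [List.count_filter rfl, hVvs]
  have hBdns : ((l.filter notH).filter notU).count .B = k := by
    rw [List.count_filter rfl, hBvs]
  have hcPV := countP_notV ((l.filter notH).filter notU)
  have h3l : (((l.filter notH).filter notU).map notV).length = i+j+k := by
    rw [List.length_map]; exact hdnslen
  have h3c : (((l.filter notH).filter notU).map notV).count true = i+k := by
    rw [count_true_map]; omega
  have hrestlen : (((l.filter notH).filter notU).filter notV).length = i+k := by
    rw [← List.countP_eq_length_filter]; omega
  have hBrest : (((l.filter notH).filter notU).filter notV).count .B = k := by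
    rw [List.count_filter rfl, hBdns]
  have h4l : ((((l.filter notH).filter notU).filter notV).map isB).length = i+k := by
    rw [List.length_map]; exact hrestlen
  have h4c : ((((l.filter notH).filter notU).filter notV).map isB).count true = k := by
    rw [count_true_map, countP_isB]; exact hBrest
  have h1l : (l.map notH).length = n+j+2*k := by rw [List.length_map]; exact hlen
  have h1c : (l.map notH).count true = 2*(i+j+k) := by rw [count_true_map]; omega
  refine ⟨⟨⟨⟨((l.filter notH).map notU).map bToD, by rw [hdlU, hdlD], hpre⟩, hdlU⟩,
    ⟨l.map notH, h1l, h1c⟩,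
    ⟨((l.filter notH).filter notU).map notV, h3l, h3c⟩,
    ⟨(((l.filter notH).filter notU).filter notV).map isB, h4l, h4c⟩⟩, ?_⟩
  apply Subtype.ext
  exact dec_enc l

theorem card_TT (n i j k : ℕ) :
    Nat.card (TT n i j k) = catalan (i+j+k) * (n+j+2*k).choose (2*(i+j+k)) *
      (i+j+k).choose (i+k) * (i+k).choose k := by
  rw [TT, Nat.card_prod, Nat.card_prod, Nat.card_prod,
    Nat.card_eq_fintype_card, DyckWord.card_dyckWord_semilength_eq_catalan,
    Nat.card_coe_set_eq, Nat.card_coe_set_eq, Nat.card_coe_set_eq,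
    ncard_BL, ncard_BL, ncard_BL]
  ring

end RAux

/-- The set of `R_II` paths from `(0,0)` to `(n,0)` with exactly `i` `D` steps,
`j` `V` steps and `k` `B` steps is finite; if `2i + j ≤ n` its cardinality is
`C_{i+j+k} · binom(n+j+2k, n−2i−j) · binom(i+j+k, j) · binom(i+k, i)` (where `C_N` is
the `N`-th Catalan number), and if `2i + j > n` it is empty. -/
theorem stmt10 (n i j k : ℕ) :
    (GammaCount n i j k).Finite ∧
      (2 * i + j ≤ n →
        (GammaCount n i j k).ncard =
          catalan (i + j + k) * (n + j + 2 * k).choose (n - 2 * i - j) *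
            (i + j + k).choose j * (i + k).choose i) ∧
      (n < 2 * i + j → GammaCount n i j k = ∅) := by
  refine ⟨?_, ?_, ?_⟩
  · exact (List.finite_length_eq RStep (n+j+2*k)).subset
      (fun l hl => (RAux.mem_char hl).2.2.2)
  · intro h2
    rw [← Nat.card_coe_set_eq,
      ← Nat.card_eq_of_bijective (RAux.decT n i j k h2)
        ⟨RAux.decT_inj n i j k h2, RAux.decT_surj n i j k h2⟩,
      RAux.card_TT,
      Nat.choose_symm_of_eq_add (show n+j+2*k = 2*(i+j+k) + (n-2*i-j) by omega),
      Nat.choose_symm_of_eq_add (show i+j+k = (i+k) + j by omega),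
      Nat.choose_symm_of_eq_add (show i+k = k + i by omega)]
  · intro hlt
    ext l
    simp only [Set.mem_empty_iff_false, iff_false]
    intro hl
    have := (RAux.mem_char hl).1
    omega
end

section
/- Let a, b, λ, c be complex numbers with |c| < 1/4, and give every R_II path the weight determined by the constant sequences a_i = a, b_i = b, λ_i = λ, c_i = c. Then the family (wt(p))_{p∈Γ_n} is summable and Σ_{p∈Γ_n} wt(p) = Σ C_{i+j+k} · binom(n+j+2k, n−2i−j) · binom(i+j+k, j) · binom(i+k, i) · b^{n−2i−j} λ^i a^j c^k, where the (absolutely convergent) sum on the right runs over all triples (i,j,k) of nonnegative integers with 2i + j ≤ n, and C_N = binom(2N, N)/(N+1) is the N-th Catalan number. -/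
open Polynomial

section Basics
open List

lemma heightsNonneg_cons {h : ℤ} {s : RStep} {l : List RStep} :
    heightsNonneg h (s :: l) ↔ 0 ≤ h + s.disp.2 ∧ heightsNonneg (h + s.disp.2) l := Iff.rfl

lemma heightsNonneg_nil {h : ℤ} : heightsNonneg h [] := trivial

lemma length_eq_counts (l : List RStep) :
    l.length = l.count .U + l.count .H + l.count .D + l.count .V + l.count .B := by
  induction l with
  | nil => simp
  | cons s l ih => cases s <;> simp [List.count_cons, ih] <;> omega

lemma pathWt_const (a b lam c : ℂ) (h : ℤ) (l : List RStep) :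
    pathWt (fun _ => a) (fun _ => b) (fun _ => lam) (fun _ => c) h l =
      b ^ l.count .H * lam ^ l.count .D * a ^ l.count .V * c ^ l.count .B := by
  induction l generalizing h with
  | nil => simp [pathWt]
  | cons s l ih =>
    cases s <;> simp [pathWt, stepWt, List.count_cons, ih] <;> ring

lemma endPt_eq (l : List RStep) (st : ℤ × ℤ) :
    endPt st l = (st.1 + ((l.count .U : ℤ) + l.count .H + l.count .D - l.count .B),
      st.2 + ((l.count .U : ℤ) - l.count .D - l.count .V - l.count .B)) := by
  induction l generalizing st with
  | nil => simp [endPt]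
  | cons s l ih =>
    rw [show endPt st (s :: l) = endPt (st + s.disp) l from rfl, ih]
    cases s <;> simp [RStep.disp, List.count_cons, Prod.ext_iff] <;> push_cast <;> omega

lemma mem_Gamma_iff {n : ℕ} {l : List RStep} :
    l ∈ Gamma n 0 0 ↔ heightsNonneg 0 l ∧
      l.count .U = l.count .D + l.count .V + l.count .B ∧
      l.count .U + l.count .H + l.count .D = n + l.count .B := by
  unfold Gamma
  rw [Set.mem_setOf_eq, endPt_eq, Prod.ext_iff]
  simp only [Nat.cast_zero]
  constructor
  · rintro ⟨h1, h2, h3⟩; refine ⟨h1, by omega, by omega⟩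
  · rintro ⟨h1, h2, h3⟩; refine ⟨h1, by omega, by omega⟩

end Basics
section Ins
open List
variable {α : Type*} [DecidableEq α]

/-- Insert `x0` at the `true` positions of the mask `v`, filling `false` positions from `l`. -/
def ins (x0 : α) : List Bool → List α → List α
  | [], l => l
  | true :: v, l => x0 :: ins x0 v l
  | false :: _, [] => []
  | false :: v, x :: l => x :: ins x0 v l

def maskOf (x0 : α) (l : List α) : List Bool := l.map (fun x => decide (x = x0))

def remOf (x0 : α) (l : List α) : List α := l.filter (fun x => decide (x ≠ x0))

lemma maskOf_nil (x0 : α) : maskOf x0 [] = [] := rfl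
lemma remOf_nil (x0 : α) : remOf x0 [] = [] := rfl

lemma maskOf_cons (x0 y : α) (l : List α) :
    maskOf x0 (y :: l) = decide (y = x0) :: maskOf x0 l := rfl

lemma remOf_cons (x0 y : α) (l : List α) :
    remOf x0 (y :: l) = if y = x0 then remOf x0 l else y :: remOf x0 l := by
  by_cases h : y = x0 <;> simp [remOf, List.filter_cons, h]

lemma bool_count_length (v : List Bool) : v.count true + v.count false = v.length := by
  induction v with
  | nil => simp
  | cons b v ih => cases b <;> simp [List.count_cons] <;> omega

lemma maskOf_length (x0 : α) (l : List α) : (maskOf x0 l).length = l.length := by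
  simp [maskOf]

lemma maskOf_count_true (x0 : α) (l : List α) : (maskOf x0 l).count true = l.count x0 := by
  induction l with
  | nil => simp [maskOf]
  | cons x l ih =>
    rw [maskOf_cons]
    by_cases h : x = x0 <;> simp [List.count_cons, h, ih]

lemma remOf_count_self (x0 : α) (l : List α) : (remOf x0 l).count x0 = 0 := by
  rw [List.count_eq_zero]
  intro h
  simpa using (List.of_mem_filter h)

lemma remOf_count_ne (x0 : α) {x : α} (hx : x ≠ x0) (l : List α) :
    (remOf x0 l).count x = l.count x := by
  induction l with
  | nil => simp [remOf]
  | cons y l ih =>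
    rw [remOf_cons]
    by_cases h : y = x0
    · subst h
      simp [List.count_cons, ih, Ne.symm hx]
    · rw [if_neg h]
      simp [List.count_cons, ih]

lemma remOf_length (x0 : α) (l : List α) : (remOf x0 l).length + l.count x0 = l.length := by
  induction l with
  | nil => simp [remOf]
  | cons y l ih =>
    rw [remOf_cons]
    by_cases h : y = x0 <;> simp [h, List.count_cons] <;> omega

lemma ins_maskOf_remOf (x0 : α) (l : List α) : ins x0 (maskOf x0 l) (remOf x0 l) = l := by
  induction l with
  | nil => rfl
  | cons x l ih =>
    rw [maskOf_cons, remOf_cons]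
    by_cases h : x = x0
    · subst h; simp only [decide_eq_true_eq, if_pos rfl]
      show ins x (true :: maskOf x l) (remOf x l) = x :: l
      rw [show ins x (true :: maskOf x l) (remOf x l) = x :: ins x (maskOf x l) (remOf x l)
        from rfl, ih]
    · have hd : decide (x = x0) = false := by simp [h]
      rw [hd, if_neg h]
      show x :: ins x0 (maskOf x0 l) (remOf x0 l) = x :: l
      rw [ih]

variable {x0 : α} {v : List Bool} {l : List α}

lemma ins_length (hv : v.count false = l.length) : (ins x0 v l).length = v.length := by
  induction v generalizing l with
  | nil =>
    have : l = [] := List.length_eq_zero_iff.mp (by simpa using hv.symm)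
    subst this; rfl
  | cons b v ih =>
    cases b with
    | true =>
      simp only [List.count_cons] at hv
      show (x0 :: ins x0 v l).length = _
      simp only [List.length_cons]
      rw [ih (by simpa using hv)]
    | false =>
      cases l with
      | nil => simp [List.count_cons] at hv
      | cons x l =>
        simp only [List.count_cons, List.length_cons] at hv
        show (x :: ins x0 v l).length = _
        simp only [List.length_cons]
        rw [ih (by simpa using hv)]

lemma maskOf_ins (hv : v.count false = l.length) (hl : l.count x0 = 0) :
    maskOf x0 (ins x0 v l) = v := by
  induction v generalizing l with
  | nil =>
    have : l = [] := List.length_eq_zero_iff.mp (by simpa using hv.symm)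
    subst this; rfl
  | cons b v ih =>
    cases b with
    | true =>
      simp only [List.count_cons] at hv
      show maskOf x0 (x0 :: ins x0 v l) = _
      rw [maskOf_cons, ih (by simpa using hv) hl]
      simp
    | false =>
      cases l with
      | nil => simp [List.count_cons] at hv
      | cons x l =>
        simp only [List.count_cons, List.length_cons] at hv
        simp only [List.count_cons] at hl
        have hx : ¬ (x = x0) := by
          intro h; rw [if_pos (by simp [h])] at hl; omega
        rw [if_neg (by simp [hx])] at hl
        show maskOf x0 (x :: ins x0 v l) = _
        rw [maskOf_cons, ih (by simpa using hv) (by simpa using hl)]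
        simp [hx]

lemma remOf_ins (hv : v.count false = l.length) (hl : l.count x0 = 0) :
    remOf x0 (ins x0 v l) = l := by
  induction v generalizing l with
  | nil =>
    have : l = [] := List.length_eq_zero_iff.mp (by simpa using hv.symm)
    subst this; rfl
  | cons b v ih =>
    cases b with
    | true =>
      simp only [List.count_cons] at hv
      show remOf x0 (x0 :: ins x0 v l) = _
      rw [remOf_cons, if_pos rfl, ih (by simpa using hv) hl]
    | false =>
      cases l with
      | nil => simp [List.count_cons] at hv
      | cons x l =>
        simp only [List.count_cons, List.length_cons] at hv
        simp only [List.count_cons] at hl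
        have hx : ¬ (x = x0) := by
          intro h; rw [if_pos (by simp [h])] at hl; omega
        rw [if_neg (by simp [hx])] at hl
        show remOf x0 (x :: ins x0 v l) = _
        rw [remOf_cons, if_neg hx, ih (by simpa using hv) (by simpa using hl)]

lemma ins_count_self (hv : v.count false = l.length) (hl : l.count x0 = 0) :
    (ins x0 v l).count x0 = v.count true := by
  conv_rhs => rw [← maskOf_ins hv hl]
  rw [maskOf_count_true]

lemma ins_count_ne {x : α} (hx : x ≠ x0) (hv : v.count false = l.length)
    (hl : l.count x0 = 0) : (ins x0 v l).count x = l.count x := by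
  conv_rhs => rw [← remOf_ins hv hl]
  rw [remOf_count_ne _ hx]

end Ins
section Heights
open List

/-- Ballot condition for a boolean mask: partial sums of `±1` stay nonnegative. -/
def mball : ℤ → List Bool → Prop
  | _, [] => True
  | h, b :: v => 0 ≤ h + (if b then 1 else -1) ∧ mball (h + if b then 1 else -1) v

lemma heightsNonneg_ins_H {v : List Bool} {l : List RStep} {h : ℤ}
    (hv : v.count false = l.length) (h0 : 0 ≤ h) :
    heightsNonneg h (ins RStep.H v l) ↔ heightsNonneg h l := by
  induction v generalizing l h with
  | nil =>
    have : l = [] := List.length_eq_zero_iff.mp (by simpa using hv.symm)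
    subst this; rfl
  | cons b v ih =>
    cases b with
    | true =>
      simp only [List.count_cons] at hv
      show heightsNonneg h (RStep.H :: ins RStep.H v l) ↔ _
      rw [heightsNonneg_cons]
      have : h + (RStep.H).disp.2 = h := by simp [RStep.disp]
      rw [this]
      simp only [h0, true_and]  -- 0 ≤ h + 0
      · exact ih (by simpa using hv) h0
    | false =>
      cases l with
      | nil => simp [List.count_cons] at hv
      | cons s l =>
        simp only [List.count_cons, List.length_cons] at hv
        show heightsNonneg h (s :: ins RStep.H v l) ↔ _
        rw [heightsNonneg_cons, heightsNonneg_cons]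
        constructor
        · rintro ⟨h1, h2⟩
          exact ⟨h1, (ih (by simpa using hv) h1).mp h2⟩
        · rintro ⟨h1, h2⟩
          exact ⟨h1, (ih (by simpa using hv) h1).mpr h2⟩

lemma heightsNonneg_ins_U {v : List Bool} {l : List RStep} {h : ℤ}
    (hv : v.count false = l.length) (hd : ∀ s ∈ l, s.disp.2 = -1) :
    heightsNonneg h (ins RStep.U v l) ↔ mball h v := by
  induction v generalizing l h with
  | nil =>
    have : l = [] := List.length_eq_zero_iff.mp (by simpa using hv.symm)
    subst this; simp [mball, heightsNonneg, ins]
  | cons b v ih =>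
    cases b with
    | true =>
      simp only [List.count_cons] at hv
      show heightsNonneg h (RStep.U :: ins RStep.U v l) ↔ _
      rw [heightsNonneg_cons, show mball h (true :: v) =
        (0 ≤ h + 1 ∧ mball (h + 1) v) from rfl]
      have : (RStep.U).disp.2 = 1 := rfl
      rw [this]
      exact and_congr Iff.rfl (ih (by simpa using hv) hd)
    | false =>
      cases l with
      | nil => simp [List.count_cons] at hv
      | cons s l =>
        simp only [List.count_cons, List.length_cons] at hv
        show heightsNonneg h (s :: ins RStep.U v l) ↔ _
        rw [heightsNonneg_cons, show mball h (false :: v) =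
          (0 ≤ h + -1 ∧ mball (h + -1) v) from rfl]
        rw [hd s (by simp)]
        exact and_congr Iff.rfl
          (ih (by simpa using hv) (fun x hx => hd x (by simp [hx])))

lemma mball_iff_take (v : List Bool) (h : ℤ) (h0 : 0 ≤ h) :
    mball h v ↔ ∀ i, ((v.take i).count false : ℤ) ≤ h + (v.take i).count true := by
  induction v generalizing h with
  | nil => simp [mball, h0]
  | cons b v ih =>
    rw [show mball h (b :: v) =
      (0 ≤ h + (if b then 1 else -1) ∧ mball (h + if b then 1 else -1) v) from rfl]
    constructor
    · rintro ⟨h1, h2⟩ i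
      cases i with
      | zero => simpa using h0
      | succ i =>
        have := (ih (h + if b then 1 else -1) h1).mp h2 i
        cases b <;> simp [List.take_succ_cons, List.count_cons] at this ⊢ <;> push_cast <;> omega
    · intro hall
      have h1 : 0 ≤ h + (if b then 1 else -1) := by
        have := hall 1
        cases b <;> simp [List.count_cons] at this ⊢ <;> omega
      refine ⟨h1, (ih _ h1).mpr fun i => ?_⟩
      have := hall (i + 1)
      cases b <;> simp [List.take_succ_cons, List.count_cons] at this ⊢ <;> push_cast at this ⊢ <;> omega

end Heights
section Extract
open List
variable {α : Type*} [DecidableEq α]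

/-- Generic extraction: a word with `h` occurrences of `x0` corresponds to a boolean mask
together with the word with all `x0` removed. -/
def extractEquiv (x0 : α) (L h : ℕ) (P : List α → Prop) (Q : List Bool → Prop)
    (R : List α → Prop)
    (hPQR : ∀ (v : List Bool) (l : List α), v.count false = l.length → l.count x0 = 0 →
      (P (ins x0 v l) ↔ Q v ∧ R l)) :
    {l : List α // l.count x0 = h ∧ l.length = L ∧ P l} ≃
      {v : List Bool // v.length = L ∧ v.count true = h ∧ Q v} ×
        {l : List α // l.count x0 = 0 ∧ l.length = L - h ∧ R l} where
  toFun x := by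
    obtain ⟨l, hc, hL, hP⟩ := x
    have hwf : (maskOf x0 l).count false = (remOf x0 l).length := by
      have b1 := bool_count_length (maskOf x0 l)
      have := maskOf_length x0 l
      have := maskOf_count_true x0 l
      have := remOf_length x0 l
      omega
    have hQR := (hPQR (maskOf x0 l) (remOf x0 l) hwf (remOf_count_self x0 l))
    rw [ins_maskOf_remOf] at hQR
    refine ⟨⟨maskOf x0 l, ?_, ?_, (hQR.mp hP).1⟩, ⟨remOf x0 l, remOf_count_self x0 l, ?_,
      (hQR.mp hP).2⟩⟩
    · rw [maskOf_length, hL]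
    · rw [maskOf_count_true, hc]
    · have := remOf_length x0 l; omega
  invFun x := by
    obtain ⟨⟨v, hvL, hvt, hQ⟩, ⟨l, hl0, hlL, hR⟩⟩ := x
    have hwf : v.count false = l.length := by
      have := bool_count_length v
      have hh : h ≤ L := by
        rw [← hvL, ← hvt]; have := bool_count_length v; omega
      omega
    refine ⟨ins x0 v l, ?_, ?_, (hPQR v l hwf hl0).mpr ⟨hQ, hR⟩⟩
    · rw [ins_count_self hwf hl0, hvt]
    · rw [ins_length hwf, hvL]
  left_inv := by
    rintro ⟨l, hc, hL, hP⟩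
    simp only
    congr 1
    exact ins_maskOf_remOf x0 l
  right_inv := by
    rintro ⟨⟨v, hvL, hvt, hQ⟩, ⟨l, hl0, hlL, hR⟩⟩
    have hwf : v.count false = l.length := by
      have := bool_count_length v
      have hh : h ≤ L := by rw [← hvL, ← hvt]; have := bool_count_length v; omega
      omega
    simp only [Prod.mk.injEq, Subtype.mk.injEq]
    exact ⟨maskOf_ins hwf hl0, remOf_ins hwf hl0⟩

end Extract

section MaskCount
open List Finset

lemma count_ofFn {α : Type*} [DecidableEq α] (x0 : α) {L : ℕ} (f : Fin L → α) :
    (List.ofFn f).count x0 = (Finset.univ.filter fun i => f i = x0).card := by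
  induction L with
  | zero => simp
  | succ L ih =>
    rw [List.ofFn_succ, List.count_cons, ih (fun i => f i.succ), Fin.univ_succ,
      Finset.filter_cons]
    by_cases h : f 0 = x0
    · rw [if_pos h, Finset.card_cons, if_pos (by simpa using h), Finset.filter_map,
        Finset.card_map]
      congr 1
    · rw [if_neg h, if_neg (by simpa using h), add_zero, Finset.filter_map, Finset.card_map]
      congr 1

/-- Boolean masks of length `L` with `h` `true`s correspond to `h`-element subsets of `Fin L`. -/
def maskFinEquiv (L h : ℕ) :
    {v : List Bool // v.length = L ∧ v.count true = h ∧ True} ≃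
      {S : Finset (Fin L) // S.card = h} where
  toFun x := by
    obtain ⟨v, hL, hc, -⟩ := x
    refine ⟨Finset.univ.filter fun i : Fin L => v.get (Fin.cast hL.symm i) = true, ?_⟩
    have : v = List.ofFn (fun i : Fin L => v.get (Fin.cast hL.symm i)) := by
      apply List.ext_get (by simpa using hL)
      intro i h1 h2
      simp
    rw [← count_ofFn true (fun i : Fin L => v.get (Fin.cast hL.symm i)), ← this, hc]
  invFun S := ⟨List.ofFn (fun i : Fin L => i ∈ S.1), by simp, by
    rw [count_ofFn]
    simpa using S.2, trivial⟩
  left_inv := by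
    rintro ⟨v, hL, hc, -⟩
    simp only [Subtype.mk.injEq]
    apply List.ext_get (by simpa using hL.symm)
    intro i h1 h2
    simp only [List.get_ofFn]
    simp
  right_inv := by
    rintro ⟨S, hS⟩
    simp only [Subtype.mk.injEq]
    ext i
    simp

end MaskCount
section Dyck
open List

def bToD : Bool → DyckStep := fun b => bif b then .U else .D
def dToB : DyckStep → Bool := fun s => match s with | .U => true | .D => false

lemma bToD_inj : Function.Injective bToD := by decide
lemma dToB_inj : Function.Injective dToB := fun x y => by cases x <;> cases y <;> simp [dToB]

/-- Boolean ballot masks of semilength `m` correspond to Dyck words of semilength `m`. -/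
def maskDyckEquiv (m : ℕ) :
    {v : List Bool // v.length = 2 * m ∧ v.count true = m ∧ mball 0 v} ≃
      {p : DyckWord // p.semilength = m} where
  toFun x := by
    obtain ⟨v, hL, ht, hb⟩ := x
    have hf : v.count false = m := by have := bool_count_length v; omega
    refine ⟨⟨v.map bToD, ?_, ?_⟩, ?_⟩
    · rw [show DyckStep.U = bToD true from rfl, show DyckStep.D = bToD false from rfl,
        List.count_map_of_injective _ _ bToD_inj, List.count_map_of_injective _ _ bToD_inj,
        ht, hf]
    · intro i
      rw [← List.map_take, show DyckStep.U = bToD true from rfl,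
        show DyckStep.D = bToD false from rfl,
        List.count_map_of_injective _ _ bToD_inj, List.count_map_of_injective _ _ bToD_inj]
      have := (mball_iff_take v 0 le_rfl).mp hb i
      rw [zero_add] at this
      exact_mod_cast this
    · show (v.map bToD).count DyckStep.U = m
      rw [show DyckStep.U = bToD true from rfl, List.count_map_of_injective _ _ bToD_inj, ht]
  invFun x := by
    obtain ⟨p, hp⟩ := x
    refine ⟨p.toList.map dToB, ?_, ?_, ?_⟩
    · rw [List.length_map, ← p.two_mul_semilength_eq_length, hp]
    · rw [show true = dToB DyckStep.U from rfl, List.count_map_of_injective _ _ dToB_inj]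
      exact hp
    · rw [mball_iff_take _ _ le_rfl]
      intro i
      rw [← List.map_take, show true = dToB DyckStep.U from rfl,
        show false = dToB DyckStep.D from rfl,
        List.count_map_of_injective _ _ dToB_inj, List.count_map_of_injective _ _ dToB_inj]
      have := p.count_D_le_count_U i
      push_cast
      omega
  left_inv := by
    rintro ⟨v, hL, ht, hb⟩
    simp only [Subtype.mk.injEq]
    rw [List.map_map, show dToB ∘ bToD = id from funext (fun x => by cases x <;> rfl), List.map_id]
  right_inv := by
    rintro ⟨p, hp⟩
    simp only [Subtype.mk.injEq]
    ext1
    show (p.toList.map dToB).map bToD = p.toList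
    rw [List.map_map, show bToD ∘ dToB = id from funext (fun x => by cases x <;> rfl), List.map_id]

end Dyck
section Fiber
open List

variable (n i j k : ℕ)

def FiberType : Type :=
  {S : Finset (Fin (n + j + 2 * k)) // S.card = n - 2 * i - j} ×
    ({p : DyckWord // p.semilength = i + j + k} ×
      ({S : Finset (Fin (i + j + k)) // S.card = j} ×
        ({S : Finset (Fin (i + k)) // S.card = i} × PUnit)))

instance : Fintype (FiberType n i j k) := by unfold FiberType; infer_instance

lemma card_FiberType : Fintype.card (FiberType n i j k) =
    (n + j + 2 * k).choose (n - 2 * i - j) * (catalan (i + j + k) *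
      ((i + j + k).choose j * ((i + k).choose i * 1))) := by
  unfold FiberType
  rw [Fintype.card_prod, Fintype.card_prod, Fintype.card_prod, Fintype.card_prod]
  rw [Fintype.card_finset_len, Fintype.card_finset_len, Fintype.card_finset_len,
    DyckWord.card_dyckWord_semilength_eq_catalan]
  simp [Fintype.card_fin]

def stepA : {l : List RStep // l.count .H = n - 2 * i - j ∧ l.length = n + j + 2 * k ∧
      (heightsNonneg 0 l ∧ l.count .U = i + j + k ∧ l.count .D = i ∧ l.count .V = j ∧
        l.count .B = k)} ≃
    {v : List Bool // v.length = n + j + 2 * k ∧ v.count true = n - 2 * i - j ∧ True} ×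
      {l : List RStep // l.count .H = 0 ∧ l.length = (n + j + 2 * k) - (n - 2 * i - j) ∧
        (heightsNonneg 0 l ∧ l.count .U = i + j + k ∧ l.count .D = i ∧ l.count .V = j ∧
          l.count .B = k)} :=
  extractEquiv RStep.H _ _ _ _ _ (fun v l hv hl => by
    rw [heightsNonneg_ins_H hv le_rfl,
      ins_count_ne (show RStep.U ≠ RStep.H by decide) hv hl,
      ins_count_ne (show RStep.D ≠ RStep.H by decide) hv hl,
      ins_count_ne (show RStep.V ≠ RStep.H by decide) hv hl,
      ins_count_ne (show RStep.B ≠ RStep.H by decide) hv hl, true_and])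

def stepB : {l : List RStep // l.count .U = i + j + k ∧ l.length = 2 * (i + j + k) ∧
      (heightsNonneg 0 l ∧ l.count .H = 0 ∧ l.count .D = i ∧ l.count .V = j ∧
        l.count .B = k)} ≃
    {v : List Bool // v.length = 2 * (i + j + k) ∧ v.count true = i + j + k ∧ mball 0 v} ×
      {l : List RStep // l.count .U = 0 ∧ l.length = 2 * (i + j + k) - (i + j + k) ∧
        (l.count .H = 0 ∧ l.count .D = i ∧ l.count .V = j ∧ l.count .B = k)} :=
  extractEquiv RStep.U _ _ _ _ _ (fun v l hv hl => by
    rw [ins_count_ne (show RStep.H ≠ RStep.U by decide) hv hl,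
      ins_count_ne (show RStep.D ≠ RStep.U by decide) hv hl,
      ins_count_ne (show RStep.V ≠ RStep.U by decide) hv hl,
      ins_count_ne (show RStep.B ≠ RStep.U by decide) hv hl]
    constructor
    · rintro ⟨hhn, hH, hrest⟩
      have hdown : ∀ s ∈ l, s.disp.2 = -1 := by
        intro s hs
        cases s
        · exact absurd hs (List.count_eq_zero.mp hl)
        · exact absurd hs (List.count_eq_zero.mp hH)
        all_goals rfl
      exact ⟨(heightsNonneg_ins_U hv hdown).mp hhn, hH, hrest⟩
    · rintro ⟨hmb, hH, hrest⟩
      have hdown : ∀ s ∈ l, s.disp.2 = -1 := by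
        intro s hs
        cases s
        · exact absurd hs (List.count_eq_zero.mp hl)
        · exact absurd hs (List.count_eq_zero.mp hH)
        all_goals rfl
      exact ⟨(heightsNonneg_ins_U hv hdown).mpr hmb, hH, hrest⟩)

def stepC : {l : List RStep // l.count .V = j ∧ l.length = i + j + k ∧
      (l.count .U = 0 ∧ l.count .H = 0 ∧ l.count .D = i ∧ l.count .B = k)} ≃
    {v : List Bool // v.length = i + j + k ∧ v.count true = j ∧ True} ×
      {l : List RStep // l.count .V = 0 ∧ l.length = (i + j + k) - j ∧
        (l.count .U = 0 ∧ l.count .H = 0 ∧ l.count .D = i ∧ l.count .B = k)} :=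
  extractEquiv RStep.V _ _ _ _ _ (fun v l hv hl => by
    rw [ins_count_ne (show RStep.U ≠ RStep.V by decide) hv hl,
      ins_count_ne (show RStep.H ≠ RStep.V by decide) hv hl,
      ins_count_ne (show RStep.D ≠ RStep.V by decide) hv hl,
      ins_count_ne (show RStep.B ≠ RStep.V by decide) hv hl, true_and])

def stepD : {l : List RStep // l.count .D = i ∧ l.length = i + k ∧
      (l.count .U = 0 ∧ l.count .H = 0 ∧ l.count .V = 0 ∧ l.count .B = k)} ≃
    {v : List Bool // v.length = i + k ∧ v.count true = i ∧ True} ×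
      {l : List RStep // l.count .D = 0 ∧ l.length = (i + k) - i ∧
        (l.count .U = 0 ∧ l.count .H = 0 ∧ l.count .V = 0 ∧ l.count .B = k)} :=
  extractEquiv RStep.D _ _ _ _ _ (fun v l hv hl => by
    rw [ins_count_ne (show RStep.U ≠ RStep.D by decide) hv hl,
      ins_count_ne (show RStep.H ≠ RStep.D by decide) hv hl,
      ins_count_ne (show RStep.V ≠ RStep.D by decide) hv hl,
      ins_count_ne (show RStep.B ≠ RStep.D by decide) hv hl, true_and])

def replicateEquiv : {l : List RStep // l.count .D = 0 ∧ l.length = k ∧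
      (l.count .U = 0 ∧ l.count .H = 0 ∧ l.count .V = 0 ∧ l.count .B = k)} ≃ PUnit where
  toFun _ := PUnit.unit
  invFun _ := ⟨List.replicate k RStep.B, by
    simp [List.count_replicate]⟩
  left_inv := by
    rintro ⟨l, hD, hlen, hU, hH, hV, hB⟩
    simp only [Subtype.mk.injEq]
    symm
    rw [List.eq_replicate_iff]
    refine ⟨hlen, fun s hs => ?_⟩
    cases s
    · exact absurd hs (List.count_eq_zero.mp hU)
    · exact absurd hs (List.count_eq_zero.mp hH)
    · exact absurd hs (List.count_eq_zero.mp hD)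
    · exact absurd hs (List.count_eq_zero.mp hV)
    · rfl
  right_inv _ := rfl

def fiberEquiv (h2 : 2 * i + j ≤ n) :
    {l : List RStep // l.count .H = n - 2 * i - j ∧ l.length = n + j + 2 * k ∧
      (heightsNonneg 0 l ∧ l.count .U = i + j + k ∧ l.count .D = i ∧ l.count .V = j ∧
        l.count .B = k)} ≃ FiberType n i j k :=
  (stepA n i j k).trans (Equiv.prodCongr (maskFinEquiv _ _)
    ((Equiv.subtypeEquivRight (fun l => by
        rw [show (n + j + 2 * k) - (n - 2 * i - j) = 2 * (i + j + k) from by omega]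
        tauto)).trans
      ((stepB i j k).trans (Equiv.prodCongr (maskDyckEquiv _)
        ((Equiv.subtypeEquivRight (fun l => by
            rw [show 2 * (i + j + k) - (i + j + k) = i + j + k from by omega]
            tauto)).trans
          ((stepC i j k).trans (Equiv.prodCongr (maskFinEquiv _ _)
            ((Equiv.subtypeEquivRight (fun l => by
                rw [show (i + j + k) - j = i + k from by omega]
                tauto)).trans
              ((stepD i k).trans (Equiv.prodCongr (maskFinEquiv _ _)
                ((Equiv.subtypeEquivRight (fun l => by
                    rw [show (i + k) - i = k from by omega])).trans (replicateEquiv k))))))))))))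

end Fiber
section Global
open List

variable (n : ℕ)

def cnt (p : ↥(Gamma n 0 0)) : {t : ℕ × ℕ × ℕ // 2 * t.1 + t.2.1 ≤ n} :=
  ⟨(p.1.count .D, p.1.count .V, p.1.count .B), by
    obtain ⟨-, h1, h2⟩ := mem_Gamma_iff.mp p.2
    show 2 * p.1.count .D + p.1.count .V ≤ n
    omega⟩

def gammaFiberEquiv (t : {t : ℕ × ℕ × ℕ // 2 * t.1 + t.2.1 ≤ n}) :
    {p : ↥(Gamma n 0 0) // cnt n p = t} ≃
      {l : List RStep // l.count .H = n - 2 * t.1.1 - t.1.2.1 ∧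
        l.length = n + t.1.2.1 + 2 * t.1.2.2 ∧
        (heightsNonneg 0 l ∧ l.count .U = t.1.1 + t.1.2.1 + t.1.2.2 ∧
          l.count .D = t.1.1 ∧ l.count .V = t.1.2.1 ∧ l.count .B = t.1.2.2)} :=
  (Equiv.subtypeEquivRight (fun p => Subtype.ext_iff)).trans
    ((Equiv.subtypeSubtypeEquivSubtypeInter (fun l => l ∈ Gamma n 0 0)
        (fun l => (l.count .D, l.count .V, l.count .B) = t.1)).trans
      (Equiv.subtypeEquivRight (fun l => by
        have hlc := length_eq_counts l
        have h2t := t.2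
        rw [mem_Gamma_iff]
        simp only [Prod.ext_iff]
        constructor
        · rintro ⟨⟨hhn, h1, h2⟩, hD, hV, hB⟩
          exact ⟨by omega, by omega, hhn, by omega, by omega, by omega, by omega⟩
        · rintro ⟨hH, hlen, hhn, hU, hD, hV, hB⟩
          exact ⟨⟨hhn, by omega, by omega⟩, by omega, by omega, by omega⟩)))

def globalEquiv : ↥(Gamma n 0 0) ≃
    Σ t : {t : ℕ × ℕ × ℕ // 2 * t.1 + t.2.1 ≤ n}, FiberType n t.1.1 t.1.2.1 t.1.2.2 :=
  (Equiv.sigmaFiberEquiv (cnt n)).symm.trans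
    (Equiv.sigmaCongrRight (fun t => (gammaFiberEquiv n t).trans
      (fiberEquiv n t.1.1 t.1.2.1 t.1.2.2 t.2)))

lemma globalEquiv_fst (p : ↥(Gamma n 0 0)) : ((globalEquiv n) p).1 = cnt n p := rfl

lemma wt_eq (a b lam c : ℂ) (p : ↥(Gamma n 0 0)) :
    pathWt (fun _ => a) (fun _ => b) (fun _ => lam) (fun _ => c) 0 p.1 =
      b ^ (n - 2 * (cnt n p).1.1 - (cnt n p).1.2.1) * lam ^ (cnt n p).1.1 *
        a ^ (cnt n p).1.2.1 * c ^ (cnt n p).1.2.2 := by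
  rw [pathWt_const]
  obtain ⟨-, h1, h2⟩ := mem_Gamma_iff.mp p.2
  have : p.1.count .H = n - 2 * (cnt n p).1.1 - (cnt n p).1.2.1 := by
    show p.1.count .H = n - 2 * p.1.count .D - p.1.count .V
    omega
  rw [this]
  rfl

end Global
section Analytic
open Finset

lemma choose_le_two_pow' (n k : ℕ) : n.choose k ≤ 2 ^ n := by
  rcases le_or_gt k n with h | h
  · calc n.choose k ≤ ∑ m ∈ Finset.range (n + 1), n.choose m :=
        Finset.single_le_sum (fun m _ => Nat.zero_le _) (Finset.mem_range.mpr (by omega))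
      _ = 2 ^ n := Nat.sum_range_choose n
  · rw [Nat.choose_eq_zero_of_lt h]; exact Nat.zero_le _

lemma catalan_le_four_pow (m : ℕ) : catalan m ≤ 4 ^ m := by
  rw [catalan_eq_centralBinom_div]
  calc m.centralBinom / (m + 1) ≤ m.centralBinom := Nat.div_le_self _ _
    _ ≤ 2 ^ (2 * m) := choose_le_two_pow' (2 * m) m
    _ = 4 ^ m := by rw [pow_mul]; norm_num

lemma summable_psi (n : ℕ) {r : ℝ} (h0 : 0 ≤ r) (h1 : r < 1) :
    Summable (fun k : ℕ => ((k : ℝ) + 1) ^ (3 * n) * r ^ k) := by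
  have hs1 : Summable (fun k : ℕ => (2 : ℝ) ^ (3 * n) * ((k : ℝ) ^ (3 * n) * r ^ k)) :=
    (summable_pow_mul_geometric_of_norm_lt_one (R := ℝ) (3 * n)
      (by rwa [Real.norm_eq_abs, abs_of_nonneg h0])).mul_left _
  have hs2 : Summable (fun k : ℕ => r ^ k) := summable_geometric_of_lt_one h0 h1
  refine Summable.of_nonneg_of_le (fun k => by positivity) (fun k => ?_) (hs1.add hs2)
  rcases Nat.eq_zero_or_pos k with hk | hk
  · subst hk
    have : (0:ℝ) ≤ (2 : ℝ) ^ (3 * n) * ((0 : ℝ) ^ (3 * n) * r ^ 0) := by positivity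
    simpa using this
  · have hb : ((k : ℝ) + 1) ^ (3 * n) ≤ (2 : ℝ) ^ (3 * n) * (k : ℝ) ^ (3 * n) := by
      rw [← mul_pow]
      refine pow_le_pow_left₀ (by positivity) ?_ _
      have : (1 : ℝ) ≤ (k : ℝ) := by exact_mod_cast hk
      linarith
    calc ((k : ℝ) + 1) ^ (3 * n) * r ^ k ≤ ((2:ℝ) ^ (3*n) * (k:ℝ) ^ (3*n)) * r ^ k :=
        mul_le_mul_of_nonneg_right hb (pow_nonneg h0 k)
      _ = (2:ℝ) ^ (3*n) * ((k:ℝ) ^ (3*n) * r ^ k) := by ring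
      _ ≤ _ := le_add_of_nonneg_right (pow_nonneg h0 k)

lemma card_fiber_bound (n i j k : ℕ) (h2 : 2 * i + j ≤ n) :
    Fintype.card (FiberType n i j k) ≤
      (((2*n+2) * ((n+1) * (n+1))) ^ n * 4 ^ n) * ((k+1) ^ (3*n) * 4 ^ k) := by
  rw [card_FiberType]
  have b1 : (n + j + 2*k).choose (n - 2*i - j) ≤ ((2*n+2) * (k+1)) ^ n := by
    calc (n + j + 2*k).choose (n - 2*i - j) ≤ (n + j + 2*k) ^ (n - 2*i - j) :=
        Nat.choose_le_pow _ _
      _ ≤ ((2*n+2) * (k+1)) ^ (n - 2*i - j) :=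
        Nat.pow_le_pow_left (by nlinarith) _
      _ ≤ ((2*n+2) * (k+1)) ^ n := Nat.pow_le_pow_right (by nlinarith) (by omega)
  have b2 : catalan (i + j + k) ≤ 4 ^ n * 4 ^ k := by
    calc catalan (i + j + k) ≤ 4 ^ (i + j + k) := catalan_le_four_pow _
      _ ≤ 4 ^ (n + k) := Nat.pow_le_pow_right (by norm_num) (by omega)
      _ = 4 ^ n * 4 ^ k := pow_add 4 n k
  have b3 : (i + j + k).choose j ≤ ((n+1) * (k+1)) ^ n := by
    calc (i + j + k).choose j ≤ (i + j + k) ^ j := Nat.choose_le_pow _ _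
      _ ≤ ((n+1) * (k+1)) ^ j := Nat.pow_le_pow_left (by nlinarith) _
      _ ≤ ((n+1) * (k+1)) ^ n := Nat.pow_le_pow_right (by nlinarith) (by omega)
  have b4 : (i + k).choose i ≤ ((n+1) * (k+1)) ^ n := by
    calc (i + k).choose i ≤ (i + k) ^ i := Nat.choose_le_pow _ _
      _ ≤ ((n+1) * (k+1)) ^ i := Nat.pow_le_pow_left (by nlinarith) _
      _ ≤ ((n+1) * (k+1)) ^ n := Nat.pow_le_pow_right (by nlinarith) (by omega)
  calc (n + j + 2*k).choose (n - 2*i - j) * (catalan (i+j+k) *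
        ((i+j+k).choose j * ((i+k).choose i * 1)))
      ≤ ((2*n+2) * (k+1)) ^ n * ((4 ^ n * 4 ^ k) *
        (((n+1) * (k+1)) ^ n * (((n+1) * (k+1)) ^ n * 1))) := by
        exact Nat.mul_le_mul b1 (Nat.mul_le_mul b2 (Nat.mul_le_mul b3 (Nat.mul_le_mul b4 le_rfl)))
    _ = (((2*n+2) * ((n+1) * (n+1))) ^ n * 4 ^ n) * ((k+1) ^ (3*n) * 4 ^ k) := by
        simp only [mul_pow, show 3 * n = n + (n + n) from by ring, pow_add]
        ring

end Analytic
section MainSummable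

lemma summable_G (C : ℝ) (hC : 0 ≤ C) (n : ℕ) {r : ℝ} (h0 : 0 ≤ r) (h1 : r < 1) :
    Summable (fun q : ℕ × ℕ × ℕ =>
      (C * (2⁻¹ : ℝ)^q.1) * ((2⁻¹ : ℝ)^q.2.1 * (((q.2.2 : ℝ) + 1)^(3*n) * r^q.2.2))) :=
  Summable.mul_of_nonneg
    (f := fun i : ℕ => C * (2⁻¹ : ℝ)^i)
    (g := fun p : ℕ × ℕ => (2⁻¹ : ℝ)^p.1 * (((p.2 : ℝ) + 1)^(3*n) * r^p.2))
    ((summable_geometric_of_lt_one (by norm_num) (by norm_num : (2⁻¹:ℝ) < 1)).mul_left _)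
    (Summable.mul_of_nonneg
      (f := fun i : ℕ => (2⁻¹ : ℝ)^i)
      (g := fun k : ℕ => ((k : ℝ) + 1)^(3*n) * r^k)
      (summable_geometric_of_lt_one (by norm_num) (by norm_num : (2⁻¹:ℝ) < 1))
      (summable_psi n h0 h1) (fun _ => by positivity) (fun _ => by positivity))
    (fun i => mul_nonneg hC (by positivity)) (fun _ => by positivity)

lemma main_summable (a b lam c : ℂ) (hc : ‖c‖ < 1 / 4) (n : ℕ) :
    Summable (fun t : {t : ℕ × ℕ × ℕ // 2 * t.1 + t.2.1 ≤ n} =>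
      (Fintype.card (FiberType n t.1.1 t.1.2.1 t.1.2.2) : ℝ) *
        (‖b‖ ^ (n - 2 * t.1.1 - t.1.2.1) * ‖lam‖ ^ t.1.1 *
          ‖a‖ ^ t.1.2.1 * ‖c‖ ^ t.1.2.2)) := by
  have hr0 : (0 : ℝ) ≤ 4 * ‖c‖ := by positivity
  have hr1 : 4 * ‖c‖ < 1 := by linarith
  have hGsum : Summable (fun q : ℕ × ℕ × ℕ =>
      ((((((2*n+2) * ((n+1)*(n+1)))^n * 4^n : ℕ) : ℝ) *
        ((1 + ‖b‖)^n * ((1 + ‖lam‖)^n * (1 + ‖a‖)^n)) * 4^n) *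
          (2⁻¹ : ℝ)^q.1) *
      ((2⁻¹ : ℝ)^q.2.1 * (((q.2.2 : ℝ) + 1)^(3*n) * (4 * ‖c‖)^q.2.2))) :=
    summable_G _ (by positivity) n hr0 hr1
  refine Summable.of_nonneg_of_le (fun t => by positivity) (fun t => ?_)
    (hGsum.comp_injective Subtype.val_injective)
  obtain ⟨⟨i, j, k⟩, ht⟩ := t
  replace ht : 2 * i + j ≤ n := ht
  simp only [Function.comp_apply]
  have hi : i ≤ n := by omega
  have hj : j ≤ n := by omega
  have hwabs0 : (0:ℝ) ≤ ‖b‖ ^ (n - 2*i - j) * ‖lam‖ ^ i *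
      ‖a‖ ^ j * ‖c‖ ^ k := by positivity
  have h_b : ‖b‖ ^ (n - 2*i - j) ≤ (1 + ‖b‖)^n :=
    le_trans (pow_le_pow_left₀ (by positivity) (by linarith [norm_nonneg b]) _)
      (pow_le_pow_right₀ (by linarith [norm_nonneg b]) (by omega))
  have h_l : ‖lam‖ ^ i ≤ (1 + ‖lam‖)^n :=
    le_trans (pow_le_pow_left₀ (by positivity)
        (by linarith [norm_nonneg lam]) _)
      (pow_le_pow_right₀ (by linarith [norm_nonneg lam]) hi)
  have h_a : ‖a‖ ^ j ≤ (1 + ‖a‖)^n :=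
    le_trans (pow_le_pow_left₀ (by positivity) (by linarith [norm_nonneg a]) _)
      (pow_le_pow_right₀ (by linarith [norm_nonneg a]) hj)
  have step2 : ‖b‖ ^ (n - 2*i - j) * ‖lam‖ ^ i *
      ‖a‖ ^ j * ‖c‖ ^ k ≤
      ((1 + ‖b‖)^n * (1 + ‖lam‖)^n * (1 + ‖a‖)^n) *
        ‖c‖ ^ k :=
    mul_le_mul (mul_le_mul (mul_le_mul h_b h_l (by positivity) (by positivity)) h_a
      (by positivity) (by positivity)) le_rfl (by positivity) (by positivity)
  have step1 : (Fintype.card (FiberType n i j k) : ℝ) ≤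
      (((((2*n+2) * ((n+1)*(n+1)))^n * 4^n) * ((k+1)^(3*n) * 4^k) : ℕ) : ℝ) :=
    Nat.cast_le.mpr (card_fiber_bound n i j k ht)
  calc (Fintype.card (FiberType n i j k) : ℝ) *
      (‖b‖ ^ (n - 2*i - j) * ‖lam‖ ^ i *
        ‖a‖ ^ j * ‖c‖ ^ k)
      ≤ (((((2*n+2) * ((n+1)*(n+1)))^n * 4^n) * ((k+1)^(3*n) * 4^k) : ℕ) : ℝ) *
        (((1 + ‖b‖)^n * (1 + ‖lam‖)^n * (1 + ‖a‖)^n) *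
          ‖c‖ ^ k) :=
      mul_le_mul step1 step2 hwabs0 (by positivity)
    _ = ((((2*n+2) * ((n+1)*(n+1)))^n * 4^n : ℕ) : ℝ) *
        ((1 + ‖b‖)^n * ((1 + ‖lam‖)^n * (1 + ‖a‖)^n)) *
        (((k:ℝ) + 1)^(3*n) * (4 * ‖c‖)^k) := by
      push_cast
      simp only [mul_pow]
      ring
    _ ≤ ((((((2*n+2) * ((n+1)*(n+1)))^n * 4^n : ℕ) : ℝ) *
        ((1 + ‖b‖)^n * ((1 + ‖lam‖)^n * (1 + ‖a‖)^n)) * 4^n) *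
          (2⁻¹ : ℝ)^i) *
      ((2⁻¹ : ℝ)^j * (((k : ℝ) + 1)^(3*n) * (4 * ‖c‖)^k)) := by
      have e1 : ((2:ℝ)⁻¹)^n ≤ (2⁻¹:ℝ)^i :=
        pow_le_pow_of_le_one (by norm_num) (by norm_num) hi
      have e2 : ((2:ℝ)⁻¹)^n ≤ (2⁻¹:ℝ)^j :=
        pow_le_pow_of_le_one (by norm_num) (by norm_num) hj
      have hone : ((2:ℝ)⁻¹)^n * ((2⁻¹:ℝ)^n * (4:ℝ)^n) = 1 := by
        rw [← mul_pow, ← mul_pow]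
        norm_num
      have hψ : (0:ℝ) ≤ ((k:ℝ) + 1)^(3*n) * (4 * ‖c‖)^k := by positivity
      have hC : (0:ℝ) ≤ ((((2*n+2) * ((n+1)*(n+1)))^n * 4^n : ℕ) : ℝ) *
          ((1 + ‖b‖)^n * ((1 + ‖lam‖)^n * (1 + ‖a‖)^n)) := by
        positivity
      calc ((((2*n+2) * ((n+1)*(n+1)))^n * 4^n : ℕ) : ℝ) *
          ((1 + ‖b‖)^n * ((1 + ‖lam‖)^n * (1 + ‖a‖)^n)) *
          (((k:ℝ) + 1)^(3*n) * (4 * ‖c‖)^k)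
          = (((((2*n+2) * ((n+1)*(n+1)))^n * 4^n : ℕ) : ℝ) *
            ((1 + ‖b‖)^n * ((1 + ‖lam‖)^n * (1 + ‖a‖)^n)) * 4^n *
            (2⁻¹:ℝ)^n) * ((2⁻¹:ℝ)^n * (((k:ℝ) + 1)^(3*n) * (4 * ‖c‖)^k)) := by
            rw [show (((((2*n+2) * ((n+1)*(n+1)))^n * 4^n : ℕ) : ℝ) *
              ((1 + ‖b‖)^n * ((1 + ‖lam‖)^n * (1 + ‖a‖)^n)) * 4^n *
              (2⁻¹:ℝ)^n) * ((2⁻¹:ℝ)^n * (((k:ℝ) + 1)^(3*n) * (4 * ‖c‖)^k)) =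
              (((((2*n+2) * ((n+1)*(n+1)))^n * 4^n : ℕ) : ℝ) *
              ((1 + ‖b‖)^n * ((1 + ‖lam‖)^n * (1 + ‖a‖)^n))) *
              (((k:ℝ) + 1)^(3*n) * (4 * ‖c‖)^k) *
              (((2:ℝ)⁻¹)^n * ((2⁻¹:ℝ)^n * (4:ℝ)^n)) from by ring, hone]
            ring
        _ ≤ (((((2*n+2) * ((n+1)*(n+1)))^n * 4^n : ℕ) : ℝ) *
            ((1 + ‖b‖)^n * ((1 + ‖lam‖)^n * (1 + ‖a‖)^n)) * 4^n *
            (2⁻¹:ℝ)^i) * ((2⁻¹:ℝ)^j * (((k:ℝ) + 1)^(3*n) * (4 * ‖c‖)^k)) := by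
            refine mul_le_mul (mul_le_mul_of_nonneg_left e1 (by positivity))
              (mul_le_mul_of_nonneg_right e2 hψ) (by positivity) (by positivity)

end MainSummable

/-- For constant complex weights with `|c| < 1/4`, the family of weights over `Γ_n` is
summable and `Σ_{p∈Γ_n} wt(p)` equals the absolutely convergent sum
`Σ C_{i+j+k} · binom(n+j+2k, n−2i−j) · binom(i+j+k, j) · binom(i+k, i) · b^{n−2i−j} λ^i a^j c^k`
over all triples `(i,j,k)` of nonnegative integers with `2i + j ≤ n`. -/
theorem stmt11 (a b lam c : ℂ) (hc : ‖c‖ < 1 / 4) (n : ℕ) :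
    (Summable fun p : Gamma n 0 0 =>
      pathWt (fun _ => a) (fun _ => b) (fun _ => lam) (fun _ => c) 0 p.1) ∧
    (Summable fun t : {t : ℕ × ℕ × ℕ // 2 * t.1 + t.2.1 ≤ n} =>
      (catalan (t.1.1 + t.1.2.1 + t.1.2.2) : ℂ) *
        ((n + t.1.2.1 + 2 * t.1.2.2).choose (n - 2 * t.1.1 - t.1.2.1) : ℂ) *
        ((t.1.1 + t.1.2.1 + t.1.2.2).choose t.1.2.1 : ℂ) *
        ((t.1.1 + t.1.2.2).choose t.1.1 : ℂ) *
        b ^ (n - 2 * t.1.1 - t.1.2.1) * lam ^ t.1.1 * a ^ t.1.2.1 * c ^ t.1.2.2) ∧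
    (∑' p : Gamma n 0 0,
        pathWt (fun _ => a) (fun _ => b) (fun _ => lam) (fun _ => c) 0 p.1) =
      ∑' t : {t : ℕ × ℕ × ℕ // 2 * t.1 + t.2.1 ≤ n},
        (catalan (t.1.1 + t.1.2.1 + t.1.2.2) : ℂ) *
          ((n + t.1.2.1 + 2 * t.1.2.2).choose (n - 2 * t.1.1 - t.1.2.1) : ℂ) *
          ((t.1.1 + t.1.2.1 + t.1.2.2).choose t.1.2.1 : ℂ) *
          ((t.1.1 + t.1.2.2).choose t.1.1 : ℂ) *
          b ^ (n - 2 * t.1.1 - t.1.2.1) * lam ^ t.1.1 * a ^ t.1.2.1 * c ^ t.1.2.2 := by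
    classical
  set F : (Σ t : {t : ℕ × ℕ × ℕ // 2 * t.1 + t.2.1 ≤ n},
      FiberType n t.1.1 t.1.2.1 t.1.2.2) → ℂ := fun σ =>
    b ^ (n - 2 * σ.1.1.1 - σ.1.1.2.1) * lam ^ σ.1.1.1 * a ^ σ.1.1.2.1 * c ^ σ.1.1.2.2 with hF
  have hcomp : (fun p : Gamma n 0 0 =>
      pathWt (fun _ => a) (fun _ => b) (fun _ => lam) (fun _ => c) 0 p.1) =
      F ∘ (globalEquiv n) := by
    funext p
    rw [Function.comp_apply]
    exact wt_eq n a b lam c p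
  have hFnormfib : ∀ (t : {t : ℕ × ℕ × ℕ // 2 * t.1 + t.2.1 ≤ n}),
      (∑' y : FiberType n t.1.1 t.1.2.1 t.1.2.2, ‖F ⟨t, y⟩‖) =
        (Fintype.card (FiberType n t.1.1 t.1.2.1 t.1.2.2) : ℝ) *
          (‖b‖ ^ (n - 2 * t.1.1 - t.1.2.1) * ‖lam‖ ^ t.1.1 *
            ‖a‖ ^ t.1.2.1 * ‖c‖ ^ t.1.2.2) := by
    intro t
    have hfun : (fun y : FiberType n t.1.1 t.1.2.1 t.1.2.2 => ‖F ⟨t, y⟩‖) = (fun _ =>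
        ‖b ^ (n - 2 * t.1.1 - t.1.2.1) * lam ^ t.1.1 * a ^ t.1.2.1 * c ^ t.1.2.2‖) := rfl
    rw [show (∑' y : FiberType n t.1.1 t.1.2.1 t.1.2.2, ‖F ⟨t, y⟩‖) = ∑' _ : FiberType n t.1.1
        t.1.2.1 t.1.2.2, ‖b ^ (n - 2 * t.1.1 - t.1.2.1) * lam ^ t.1.1 * a ^ t.1.2.1 *
        c ^ t.1.2.2‖ from congrArg tsum hfun]
    rw [tsum_fintype, Finset.sum_const, Finset.card_univ, nsmul_eq_mul]
    congr 1
    simp [norm_mul, norm_pow]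
  have hFnorm : Summable (fun σ => ‖F σ‖) := by
    rw [summable_sigma_of_nonneg (fun σ => norm_nonneg _)]
    constructor
    · intro t; exact Summable.of_finite
    · apply Summable.congr (main_summable a b lam c hc n)
      intro t
      exact (hFnormfib t).symm
  have hFsum : Summable F := Summable.of_norm hFnorm
  have h1 : Summable (fun p : Gamma n 0 0 =>
      pathWt (fun _ => a) (fun _ => b) (fun _ => lam) (fun _ => c) 0 p.1) := by
    rw [hcomp]
    exact (Equiv.summable_iff (globalEquiv n)).mpr hFsum
  have hconst : ∀ (t : {t : ℕ × ℕ × ℕ // 2 * t.1 + t.2.1 ≤ n}),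
      (∑' y : FiberType n t.1.1 t.1.2.1 t.1.2.2, F ⟨t, y⟩) =
        (catalan (t.1.1 + t.1.2.1 + t.1.2.2) : ℂ) *
          ((n + t.1.2.1 + 2 * t.1.2.2).choose (n - 2 * t.1.1 - t.1.2.1) : ℂ) *
          ((t.1.1 + t.1.2.1 + t.1.2.2).choose t.1.2.1 : ℂ) *
          ((t.1.1 + t.1.2.2).choose t.1.1 : ℂ) *
          b ^ (n - 2 * t.1.1 - t.1.2.1) * lam ^ t.1.1 * a ^ t.1.2.1 * c ^ t.1.2.2 := by
    intro t
    have hfun : (fun y : FiberType n t.1.1 t.1.2.1 t.1.2.2 => F ⟨t, y⟩) = (fun _ =>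
        b ^ (n - 2 * t.1.1 - t.1.2.1) * lam ^ t.1.1 * a ^ t.1.2.1 * c ^ t.1.2.2) := rfl
    rw [show (∑' y : FiberType n t.1.1 t.1.2.1 t.1.2.2, F ⟨t, y⟩) = ∑' _ : FiberType n t.1.1
        t.1.2.1 t.1.2.2, b ^ (n - 2 * t.1.1 - t.1.2.1) * lam ^ t.1.1 * a ^ t.1.2.1 *
        c ^ t.1.2.2 from congrArg tsum hfun]
    rw [tsum_fintype, Finset.sum_const, Finset.card_univ, nsmul_eq_mul, card_FiberType]
    push_cast
    ring
  have h2 : Summable (fun t : {t : ℕ × ℕ × ℕ // 2 * t.1 + t.2.1 ≤ n} =>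
      (catalan (t.1.1 + t.1.2.1 + t.1.2.2) : ℂ) *
        ((n + t.1.2.1 + 2 * t.1.2.2).choose (n - 2 * t.1.1 - t.1.2.1) : ℂ) *
        ((t.1.1 + t.1.2.1 + t.1.2.2).choose t.1.2.1 : ℂ) *
        ((t.1.1 + t.1.2.2).choose t.1.1 : ℂ) *
        b ^ (n - 2 * t.1.1 - t.1.2.1) * lam ^ t.1.1 * a ^ t.1.2.1 * c ^ t.1.2.2) := by
    apply Summable.of_norm
    apply Summable.congr (main_summable a b lam c hc n)
    intro t
    rw [card_FiberType]
    simp only [norm_mul, norm_pow, Complex.norm_natCast]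
    push_cast
    ring
  refine ⟨h1, h2, ?_⟩
  calc (∑' p : Gamma n 0 0,
      pathWt (fun _ => a) (fun _ => b) (fun _ => lam) (fun _ => c) 0 p.1)
      = ∑' σ, F σ := by
        conv_lhs => rw [show (fun p : Gamma n 0 0 =>
          pathWt (fun _ => a) (fun _ => b) (fun _ => lam) (fun _ => c) 0 p.1) =
          F ∘ (globalEquiv n) from hcomp]
        exact Equiv.tsum_eq (globalEquiv n) F
    _ = ∑' t, ∑' y, F ⟨t, y⟩ := Summable.tsum_sigma hFsum
    _ = _ := tsum_congr hconst
end

section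
/- Let (a_i)_{i≥1}, (b_i)_{i≥0}, (λ_i)_{i≥1}, (c_i)_{i≥1} be sequences of complex numbers such that (a_i), (b_i), (λ_i) are bounded and there exists ε > 0 with |c_m| ≤ 1/4 − ε for all m ≥ 1. Then for all n, r, s ≥ 0 the family (wt(p))_{p∈Γ_{n,r,s}} is summable in ℂ (i.e., the sum Σ_{p∈Γ_{n,r,s}} wt(p) converges absolutely). -/
open Polynomial

/-! Bound each step weight by a constant (`1` for `U`, `1/4 - ε` for `B`), so that `|wt p|` is
at most a product of step bounds. Tilting every step by `x ^ dx * y ^ dy` multiplies this product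
by the same factor `x ^ n * y ^ (s - r)` for every path of `Γ_{n,r,s}`. With `x * y = 1/2` the
tilted bounds of `U` and `B` add up to at most `1/2 + 2 (1/4 - ε) = 1 - 2ε`, and those of `H`,
`D`, `V` are `O(1/y)`; for large `y` the tilted bounds sum to less than `1`, and their products
over all words form a convergent geometric series. -/

instance : Fintype RStep :=
  ⟨{.U, .H, .D, .V, .B}, fun st => by cases st <;> decide⟩

lemma RStep.sum_univ {M : Type*} [AddCommMonoid M] (f : RStep → M) :
    ∑ st, f st = f .U + f .H + f .D + f .V + f .B := by
  simp [Finset.univ, Fintype.elems, add_assoc]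

lemma summable_prod_map_list {α : Type*} [Fintype α] {μ : α → ℝ} (hμ : ∀ a, 0 ≤ μ a)
    (hsum : ∑ a, μ a < 1) : Summable fun l : List α => (l.map μ).prod := by
  rw [← (List.equivSigmaTuple (α := α)).symm.summable_iff]
  have hterm (p : Σ n, Fin n → α) : ((List.ofFn p.2).map μ).prod = ∏ i, μ (p.2 i) := by
    rw [List.map_ofFn, List.prod_ofFn]
    rfl
  simp only [Function.comp_def, List.equivSigmaTuple_symm_apply, hterm]
  refine (summable_sigma_of_nonneg fun p => Finset.prod_nonneg fun i _ => hμ _).2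
    ⟨fun n => Summable.of_finite, ?_⟩
  simp only [tsum_fintype, ← Fintype.sum_pow]
  exact summable_geometric_of_lt_one (Finset.sum_nonneg fun a _ => hμ a) hsum

section Bounds

variable {R : Type*} [NormedCommRing R] [NormOneClass R] {a b lam c : ℕ → R}

lemma norm_pathWt_le_prod {β : RStep → ℝ} (hβ : ∀ st, 0 ≤ β st)
    (hstep : ∀ h st, 0 ≤ h + st.disp.2 → ‖stepWt a b lam c h st‖ ≤ β st) :
    ∀ {h : ℤ} {l : List RStep}, heightsNonneg h l → ‖pathWt a b lam c h l‖ ≤ (l.map β).prod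
  | _, [], _ => by simp [pathWt]
  | h, st :: l, ⟨hst, hl⟩ => by
    rw [pathWt, List.map_cons, List.prod_cons]
    exact (norm_mul_le _ _).trans <| mul_le_mul (hstep h st hst)
      (norm_pathWt_le_prod hβ hstep hl) (norm_nonneg _) (hβ st)

def stepBound (A B L C : ℝ) : RStep → ℝ
  | .U => 1
  | .H => B
  | .D => L
  | .V => A
  | .B => C

lemma stepBound_nonneg {A B L C : ℝ} (hA : 0 ≤ A) (hB : 0 ≤ B) (hL : 0 ≤ L) (hC : 0 ≤ C) :
    ∀ st, 0 ≤ stepBound A B L C st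
  | .U => zero_le_one
  | .H => hB
  | .D => hL
  | .V => hA
  | .B => hC

lemma norm_stepWt_le_stepBound {A B L C : ℝ} (ha : ∀ i, ‖a i‖ ≤ A) (hb : ∀ i, ‖b i‖ ≤ B)
    (hlam : ∀ i, ‖lam i‖ ≤ L) (hc : ∀ m, 1 ≤ m → ‖c m‖ ≤ C) (h : ℤ) (st : RStep)
    (hst : 0 ≤ h + st.disp.2) : ‖stepWt a b lam c h st‖ ≤ stepBound A B L C st := by
  cases st with
  | U => simp [stepWt, stepBound]
  | H => exact hb _
  | D => exact hlam _
  | V => exact ha _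
  | B =>
    -- a `B` step ends at height `≥ 0`, so it starts at height `≥ 1`
    simp only [RStep.disp] at hst
    exact hc _ (by omega)

end Bounds

section Tilt

variable {G₀ : Type*} [CommGroupWithZero G₀]

def tilt (x y : G₀) (st : RStep) : G₀ := x ^ st.disp.1 * y ^ st.disp.2

lemma prod_map_tilt_mul {x y : G₀} (hx : x ≠ 0) (hy : y ≠ 0) :
    ∀ (l : List RStep) (start : ℤ × ℤ),
      (l.map (tilt x y)).prod * (x ^ start.1 * y ^ start.2) =
        x ^ (endPt start l).1 * y ^ (endPt start l).2
  | [], _ => by simp [endPt]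
  | st :: l, start => by
    rw [List.map_cons, List.prod_cons, endPt, ← prod_map_tilt_mul hx hy l, Prod.fst_add,
      Prod.snd_add, zpow_add₀ hx, zpow_add₀ hy, tilt]
    ac_rfl

lemma prod_map_tilt_of_mem_Gamma {x y : G₀} (hx : x ≠ 0) (hy : y ≠ 0) {n r s : ℕ}
    {l : List RStep} (hl : l ∈ Gamma n r s) :
    (l.map (tilt x y)).prod * y ^ (r : ℤ) = x ^ (n : ℤ) * y ^ (s : ℤ) := by
  simpa [hl.2] using prod_map_tilt_mul hx hy l (0, r)

end Tilt

lemma tilt_pos {x y : ℝ} (hx : 0 < x) (hy : 0 < y) (st : RStep) : 0 < tilt x y st := by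
  unfold tilt; positivity

lemma exists_sum_stepBound_mul_tilt_lt_one {A B L ε : ℝ} (hA : 0 ≤ A) (hB : 0 ≤ B)
    (hL : 0 ≤ L) (hε : 0 < ε) :
    ∃ y : ℝ, 0 < y ∧ ∑ st, stepBound A B L (1 / 4 - ε) st * tilt (1 / (2 * y)) y st < 1 := by
  set y := (A + B + L) / ε + 1
  have hy1 : 1 ≤ y := by have := div_nonneg (by linarith : 0 ≤ A + B + L) hε.le; linarith
  have hy : 0 < y := by linarith
  refine ⟨y, hy, ?_⟩
  have hterms : ∑ st, stepBound A B L (1 / 4 - ε) st * tilt (1 / (2 * y)) y st =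
      1 - 2 * ε + (B / (2 * y) + L / (2 * y ^ 2) + A / y) := by
    rw [RStep.sum_univ]
    simp only [stepBound, tilt, RStep.disp]
    field_simp
    ring
  have hsmall : B / (2 * y) + L / (2 * y ^ 2) + A / y ≤ ε :=
    calc B / (2 * y) + L / (2 * y ^ 2) + A / y ≤ B / y + L / y + A / y := by
          gcongr <;> nlinarith
      _ = (A + B + L) / y := by ring
      _ ≤ ε := by
          rw [div_le_iff₀ hy, mul_add, mul_div_cancel₀ _ hε.ne']
          linarith
  linarith

/-- If `(a_i), (b_i), (λ_i)` are bounded complex sequences and `|c_m| ≤ 1/4 − ε` for all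
`m ≥ 1` for some fixed `ε > 0`, then for all `n, r, s ≥ 0` the family
`(wt(p))_{p∈Γ_{n,r,s}}` is summable in ℂ. -/
theorem stmt13 (a b lam c : ℕ → ℂ)
    (hab : ∃ M : ℝ, ∀ i : ℕ, ‖a i‖ ≤ M)
    (hbb : ∃ M : ℝ, ∀ i : ℕ, ‖b i‖ ≤ M)
    (hlb : ∃ M : ℝ, ∀ i : ℕ, ‖lam i‖ ≤ M)
    (ε : ℝ) (hε : 0 < ε) (hc : ∀ m : ℕ, 1 ≤ m → ‖c m‖ ≤ 1 / 4 - ε)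
    (n r s : ℕ) :
    Summable fun p : Gamma n r s => pathWt a b lam c (r : ℤ) p.1 := by
  obtain ⟨A, ha⟩ := hab
  obtain ⟨B, hb⟩ := hbb
  obtain ⟨L, hlam⟩ := hlb
  have hA := (norm_nonneg _).trans (ha 0)
  have hB := (norm_nonneg _).trans (hb 0)
  have hL := (norm_nonneg _).trans (hlam 0)
  have hβ := stepBound_nonneg hA hB hL ((norm_nonneg _).trans (hc 1 le_rfl))
  obtain ⟨y, hy, hsum⟩ := exists_sum_stepBound_mul_tilt_lt_one hA hB hL hε
  set x : ℝ := 1 / (2 * y)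
  have hx : 0 < x := by positivity
  set β := stepBound A B L (1 / 4 - ε)
  have hmajor := ((summable_prod_map_list (fun st => mul_nonneg (hβ st) (tilt_pos hx hy st).le)
    hsum).subtype (Gamma n r s)).mul_left (y ^ (r : ℤ) / (x ^ (n : ℤ) * y ^ (s : ℤ)))
  refine hmajor.of_norm_bounded fun ⟨l, hl⟩ => ?_
  have htilt := prod_map_tilt_of_mem_Gamma hx.ne' hy.ne' hl
  have htilt_pos : 0 < (l.map (tilt x y)).prod :=
    List.prod_pos (by simpa using fun st _ => tilt_pos hx hy st)
  calc ‖pathWt a b lam c r l‖ ≤ (l.map β).prod :=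
        norm_pathWt_le_prod hβ (norm_stepWt_le_stepBound ha hb hlam hc) hl.1
    _ = y ^ (r : ℤ) / (x ^ (n : ℤ) * y ^ (s : ℤ)) *
          (l.map fun st => β st * tilt x y st).prod := by
        rw [List.prod_map_mul, ← htilt]
        field_simp
end

section
/- Let a, b, λ, c be real numbers with c ≠ 0 and |c| < 1/4, and give every R_II path the weight determined by the constant sequences a_i = a, b_i = b, λ_i = λ, c_i = c. Then for every i ≥ 0, the family (wt(p))_{p∈Γ_{i,0,i}} is summable and Σ_{p∈Γ_{i,0,i}} wt(p) = 𝒞^{i+1}, where 𝒞 = (1−√(1−4c))/(2c). -/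
open Polynomial

namespace S19

def bd (b : Bool) : ℤ := if b then 1 else -1

def bht : ℤ → List Bool → ℤ
  | h, [] => h
  | h, b :: l => bht (h + bd b) l

def bok : ℤ → List Bool → Prop
  | _, [] => True
  | h, b :: l => 0 ≤ h + bd b ∧ bok (h + bd b) l

def Db (m : ℕ) : Set (List Bool) := {l | bok 0 l ∧ bht 0 l = (m : ℤ)}

@[simp] lemma bht_nil (h : ℤ) : bht h [] = h := rfl
@[simp] lemma bht_cons (h : ℤ) (b : Bool) (l : List Bool) :
    bht h (b :: l) = bht (h + bd b) l := rfl
@[simp] lemma bok_nil (h : ℤ) : bok h [] := trivial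
lemma bok_cons (h : ℤ) (b : Bool) (l : List Bool) :
    bok h (b :: l) ↔ 0 ≤ h + bd b ∧ bok (h + bd b) l := Iff.rfl

lemma bht_shift (l : List Bool) : ∀ h : ℤ, bht h l = h + bht 0 l := by
  induction l with
  | nil => simp
  | cons b l ih => intro h; simp only [bht_cons, ih (h + bd b), ih (0 + bd b)]; ring

lemma bht_append (l₁ l₂ : List Bool) : ∀ h, bht h (l₁ ++ l₂) = bht (bht h l₁) l₂ := by
  induction l₁ with
  | nil => intro h; rfl
  | cons b l ih => intro h; simp [ih]

lemma bok_append (l₁ l₂ : List Bool) : ∀ h, bok h (l₁ ++ l₂) ↔ bok h l₁ ∧ bok (bht h l₁) l₂ := by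
  induction l₁ with
  | nil => intro h; simp
  | cons b l ih =>
      intro h
      simp only [List.cons_append, bok_cons, bht_cons, ih, and_assoc]

lemma bok_mono {h h' : ℤ} (hh : h ≤ h') (l : List Bool) : bok h l → bok h' l := by
  induction l generalizing h h' with
  | nil => intro _; trivial
  | cons b l ih =>
      rintro ⟨h1, h2⟩
      exact ⟨le_trans h1 (by omega), ih (by omega) h2⟩

lemma bok_last {h : ℤ} {l : List Bool} (hok : bok h l) (hne : l ≠ []) : 0 ≤ bht h l := by
  induction l generalizing h with
  | nil => exact absurd rfl hne
  | cons b l ih =>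
      obtain ⟨h1, h2⟩ := hok
      rcases eq_or_ne l [] with rfl | hne'
      · simpa using h1
      · exact ih h2 hne'

lemma bht_count (l : List Bool) :
    bht 0 l = (l.length : ℤ) - 2 * (l.count false : ℤ) := by
  induction l with
  | nil => simp
  | cons b l ih =>
      rw [bht_cons, bht_shift, ih]
      cases b <;> simp [bd, List.count_cons] <;> push_cast <;> ring

/-- split lemma: a path from height `h ≥ 1` staying `≥ 0` either stays `≥ 1`,
or splits at the first visit of `0`. -/
lemma splitx (rest : List Bool) : ∀ h : ℤ, 1 ≤ h → bok h rest →
    bok (h - 1) rest ∨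
      ∃ e r, rest = e ++ false :: r ∧ bok (h - 1) e ∧ bht h e = 1 ∧ bok 0 r := by
  induction rest with
  | nil => intro h _ _; exact Or.inl trivial
  | cons b l ih =>
      intro h h1 hok
      obtain ⟨hb1, hb2⟩ := hok
      rcases eq_or_ne (h + bd b) 0 with hz | hz
      · have hb : b = false := by
          cases b <;> simp [bd] at hz ⊢ <;> omega
        subst hb
        refine Or.inr ⟨[], l, rfl, trivial, ?_, ?_⟩
        · simp [bd] at hz ⊢; omega
        · rwa [hz] at hb2
      · have h1' : 1 ≤ h + bd b := by omega
        rcases ih (h + bd b) h1' hb2 with hL | ⟨e, r, hrest, he, hhe, hr⟩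
        · left
          refine ⟨by omega, ?_⟩
          have : h - 1 + bd b = h + bd b - 1 := by ring
          rwa [this]
        · right
          refine ⟨b :: e, r, by rw [hrest]; rfl, ⟨by omega, ?_⟩, ?_, hr⟩
          · have : h - 1 + bd b = h + bd b - 1 := by ring
            rwa [this]
          · simpa using hhe

/-- uniqueness of the splitting. -/
lemma uniq (e : List Bool) : ∀ (e' r r' : List Bool) (h : ℤ), 1 ≤ h →
    bok (h - 1) e → bok (h - 1) e' → bht h e = 1 → bht h e' = 1 →
    e ++ false :: r = e' ++ false :: r' → e = e' ∧ r = r' := by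
  induction e with
  | nil =>
      intro e' r r' h h1 _ hok' hht hht' heq
      have hh : h = 1 := by simpa using hht
      subst hh
      cases e' with
      | nil => simpa using heq
      | cons b' t' =>
          exfalso
          simp only [List.nil_append, List.cons_append, List.cons.injEq] at heq
          obtain ⟨hb, _⟩ := heq
          subst hb
          obtain ⟨hb1, _⟩ := hok'
          simp [bd] at hb1
  | cons b t ih =>
      intro e' r r' h h1 hok hok' hht hht' heq
      cases e' with
      | nil =>
          exfalso
          have hh : h = 1 := by simpa using hht'
          subst hh
          simp only [List.nil_append, List.cons_append, List.cons.injEq] at heq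
          obtain ⟨hb, _⟩ := heq
          subst hb
          obtain ⟨hb1, _⟩ := hok
          simp [bd] at hb1
      | cons b' t' =>
          simp only [List.cons_append, List.cons.injEq] at heq
          obtain ⟨hb, hteq⟩ := heq
          subst hb
          obtain ⟨hb1, hb2⟩ := hok
          obtain ⟨hb1', hb2'⟩ := hok'
          have key : h - 1 + bd b = h + bd b - 1 := by ring
          rw [key] at hb1 hb2 hb2'
          have h1' : 1 ≤ h + bd b := by omega
          obtain ⟨ht1, ht2⟩ := ih t' r r' (h + bd b) h1' hb2 hb2'
            (by simpa using hht) (by simpa using hht') hteq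
          exact ⟨by rw [ht1], ht2⟩


def Tm : List Bool → List Bool := fun l => true :: l
def Jm : List Bool × List Bool → List Bool := fun p => true :: (p.1 ++ false :: p.2)

lemma J_mem {m : ℕ} {e r : List Bool} (he : e ∈ Db 0) (hr : r ∈ Db m) :
    Jm (e, r) ∈ Db m := by
  obtain ⟨he1, he2⟩ := he
  obtain ⟨hr1, hr2⟩ := hr
  constructor
  · show bok 0 (true :: (e ++ false :: r))
    rw [bok_cons]
    refine ⟨by simp [bd], ?_⟩
    rw [show (0 : ℤ) + bd true = 1 by simp [bd], bok_append]
    refine ⟨bok_mono (by omega) e he1, ?_⟩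
    rw [bht_shift, he2, bok_cons]
    refine ⟨by simp [bd], ?_⟩
    simpa [bd] using hr1
  · show bht 0 (true :: (e ++ false :: r)) = (m : ℤ)
    rw [bht_cons, bht_append, bht_shift e, he2, bht_cons, bht_shift r, hr2]
    simp [bd]

lemma T_mem {m : ℕ} {l : List Bool} (hl : l ∈ Db m) : Tm l ∈ Db (m + 1) := by
  obtain ⟨h1, h2⟩ := hl
  constructor
  · exact ⟨by simp [bd], bok_mono (by simp [bd]) l h1⟩
  · show bht 0 (true :: l) = ((m : ℤ) + 1)
    rw [bht_cons, bht_shift, h2]; simp [bd]; ring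

/-- a list in `Db 0` followed by a `false` cannot be an initial segment inside a
`bok 0` path: auxiliary contradiction lemma. -/
lemma no_early_zero {e t : List Bool} (he : e ∈ Db 0) (hok : bok 0 (e ++ false :: t)) : False := by
  rw [bok_append] at hok
  obtain ⟨_, h2⟩ := hok
  rw [he.2, bok_cons] at h2
  have := h2.1
  simp [bd] at this

lemma Db_zero : Db 0 = {([] : List Bool)} ∪ Jm '' (Db 0 ×ˢ Db 0) := by
  ext l
  constructor
  · rintro ⟨h1, h2⟩
    cases l with
    | nil => exact Or.inl rfl
    | cons b rest =>
        right
        obtain ⟨hb1, hb2⟩ := h1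
        have hb : b = true := by cases b <;> simp [bd] at hb1 ⊢
        subst hb
        have h1le : (1 : ℤ) ≤ 0 + bd true := by simp [bd]
        rcases splitx rest (0 + bd true) h1le hb2 with hL | ⟨e, r, hrest, he, hhe, hr⟩
        · exfalso
          have hres : bht (0 + bd true) rest = 0 := by simpa [bd] using h2
          have hne : rest ≠ [] := by
            rintro rfl
            simp [bd] at hres
          have := bok_last hL hne
          rw [bht_shift] at this hres
          simp [bd] at this hres
          omega
        · have hbe : bht 0 e = (0 : ℤ) := by
            have h' := hhe
            rw [bht_shift] at h'
            simp [bd] at h'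
            omega
          refine ⟨(e, r), ⟨⟨?_, ?_⟩, ⟨hr, ?_⟩⟩, ?_⟩
          · simpa [bd] using he
          · simpa using hbe
          · have hth : bht 0 (true :: rest) = 0 := h2
            rw [hrest, bht_cons, bht_append, hhe, bht_cons] at hth
            simpa [bd] using hth
          · show Jm (e, r) = true :: rest
            rw [hrest]; rfl
  · rintro (rfl | ⟨⟨e, r⟩, ⟨he, hr⟩, rfl⟩)
    · exact ⟨trivial, rfl⟩
    · exact J_mem he hr

lemma Db_succ (m : ℕ) : Db (m + 1) = Tm '' Db m ∪ Jm '' (Db 0 ×ˢ Db (m + 1)) := by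
  ext l
  constructor
  · rintro ⟨h1, h2⟩
    cases l with
    | nil => exfalso; simp at h2; omega
    | cons b rest =>
        obtain ⟨hb1, hb2⟩ := h1
        have hb : b = true := by cases b <;> simp [bd] at hb1 ⊢
        subst hb
        have h1le : (1 : ℤ) ≤ 0 + bd true := by simp [bd]
        rcases splitx rest (0 + bd true) h1le hb2 with hL | ⟨e, r, hrest, he, hhe, hr⟩
        · left
          refine ⟨rest, ⟨?_, ?_⟩, rfl⟩
          · simpa [bd] using hL
          · have hres : bht (0 + bd true) rest = (m : ℤ) + 1 := by
              have : bht 0 (true :: rest) = ((m : ℤ) + 1) := by exact_mod_cast h2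
              simpa using this
            rw [bht_shift] at hres
            simp [bd] at hres
            omega
        · right
          have hbe : bht 0 e = (0 : ℤ) := by
            have h' := hhe
            rw [bht_shift] at h'
            simp [bd] at h'
            omega
          refine ⟨(e, r), ⟨⟨?_, ?_⟩, ⟨hr, ?_⟩⟩, ?_⟩
          · simpa [bd] using he
          · simpa using hbe
          · have hh2 : bht 0 (true :: rest) = (m : ℤ) + 1 := by exact_mod_cast h2
            rw [hrest, bht_cons, bht_append, hhe, bht_cons] at hh2
            simp [bd] at hh2
            push_cast
            omega
          · show Jm (e, r) = true :: rest
            rw [hrest]; rfl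
  · rintro (⟨t, ht, rfl⟩ | ⟨⟨e, r⟩, ⟨he, hr⟩, rfl⟩)
    · exact T_mem ht
    · exact J_mem he hr

lemma disj_zero : Disjoint ({([] : List Bool)} : Set (List Bool)) (Jm '' (Db 0 ×ˢ Db 0)) := by
  rw [Set.disjoint_left]
  rintro l rfl ⟨⟨e, r⟩, _, heq⟩
  simp [Jm] at heq

lemma disj_succ (m : ℕ) : Disjoint (Tm '' Db m) (Jm '' (Db 0 ×ˢ Db (m + 1))) := by
  rw [Set.disjoint_left]
  rintro l ⟨t, ht, rfl⟩ ⟨⟨e, r⟩, ⟨he, _⟩, heq⟩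
  have : t = e ++ false :: r := by
    simpa [Tm, Jm] using heq.symm
  subst this
  exact no_early_zero he ht.1

lemma injOn_J (m : ℕ) : Set.InjOn Jm (Db 0 ×ˢ Db m) := by
  rintro ⟨e, r⟩ ⟨he, _⟩ ⟨e', r'⟩ ⟨he', _⟩ heq
  simp only [Jm, List.cons.injEq, true_and] at heq
  obtain ⟨h1, h2⟩ := uniq e e' r r' 1 le_rfl (by simpa using he.1) (by simpa using he'.1)
    (by rw [bht_shift, he.2]; simp) (by rw [bht_shift, he'.2]; simp) heq
  simp [h1, h2]

lemma injOn_T (m : ℕ) : Set.InjOn Tm (Db m) := by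
  rintro t _ t' _ heq
  simpa [Tm] using heq


noncomputable section

def wt (x : ℝ) (l : List Bool) : ℝ := x ^ l.count false

lemma length_of_mem_Db {m : ℕ} {l : List Bool} (hl : l ∈ Db m) :
    l.length = m + 2 * l.count false := by
  have h := hl.2
  rw [bht_count] at h
  have hc : (l.count false : ℤ) ≤ l.length := by
    exact_mod_cast List.count_le_length (a := false) (l := l)
  omega

lemma summable_Db_abs (x : ℝ) (hx : |x| < 1 / 4) (m : ℕ) :
    Summable (fun l : Db m => |x| ^ (l.1.count false)) := by
  have h0 : (0 : ℝ) ≤ |x| := abs_nonneg x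
  set F : (Σ k : ℕ, Fin (m + 2 * k) → Bool) → ℝ := fun p => |x| ^ p.1 with hF
  have hFs : Summable F := by
    rw [summable_sigma_of_nonneg (fun p => pow_nonneg h0 _)]
    constructor
    · intro k; exact Summable.of_finite
    · apply Summable.congr (f := fun k : ℕ => (2 : ℝ) ^ m * ((4 * |x|) ^ k))
      · apply Summable.mul_left
        apply summable_geometric_of_lt_one (by positivity)
        nlinarith [abs_nonneg x]
      · intro k
        rw [tsum_fintype]
        simp only []
        rw [Finset.sum_const, Finset.card_univ, Fintype.card_fun]
        simp only [Fintype.card_fin, Fintype.card_bool]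
        rw [nsmul_eq_mul]
        push_cast
        rw [pow_add, pow_mul]
        ring
  have hinj : Function.Injective
      (fun l : Db m => (⟨l.1.count false, fun j => l.1.getD j true⟩ :
        Σ k : ℕ, Fin (m + 2 * k) → Bool)) := by
    rintro ⟨l, hl⟩ ⟨l', hl'⟩ heq
    simp only [Sigma.mk.inj_iff] at heq
    obtain ⟨hk, hfun⟩ := heq
    have hlen : l.length = l'.length := by
      rw [length_of_mem_Db hl, length_of_mem_Db hl', hk]
    have hfun' : (fun j : Fin (m + 2 * l.count false) => l.getD (j : ℕ) true) =
        fun j : Fin (m + 2 * l.count false) => l'.getD (j : ℕ) true := by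
      revert hfun
      rw [hk] at *
      intro hfun
      exact eq_of_heq hfun
    apply Subtype.ext
    apply List.ext_getElem hlen
    intro i h1 h2
    have hi : i < m + 2 * l.count false := by rw [← length_of_mem_Db hl]; exact h1
    have := congrFun hfun' ⟨i, hi⟩
    simpa [List.getD_eq_getElem, h1, h2] using this
  have := hFs.comp_injective hinj
  exact this

lemma summable_Db (x : ℝ) (hx : |x| < 1 / 4) (m : ℕ) :
    Summable (fun l : Db m => wt x l.1) := by
  apply Summable.of_norm
  apply Summable.congr (summable_Db_abs x hx m)
  intro l
  simp [wt, Real.norm_eq_abs, abs_pow]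

lemma summable_sub {f : List Bool → ℝ} {s t : Set (List Bool)} (hsub : t ⊆ s)
    (h : Summable fun l : s => f l.1) : Summable fun l : t => f l.1 :=
  h.comp_injective (Set.inclusion_injective hsub)

def myProd {α β : Type*} (s : Set α) (t : Set β) : s × t ≃ ↥(s ×ˢ t) where
  toFun := fun q => ⟨(q.1.1, q.2.1), ⟨q.1.2, q.2.2⟩⟩
  invFun := fun u => (⟨u.1.1, u.2.1⟩, ⟨u.1.2, u.2.2⟩)
  left_inv := fun q => rfl
  right_inv := fun u => rfl

def Ssum (x : ℝ) (m : ℕ) : ℝ := ∑' l : Db m, wt x l.1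

lemma wt_T (x : ℝ) (l : List Bool) : wt x (Tm l) = wt x l := by
  simp [wt, Tm, List.count_cons]

lemma wt_J (x : ℝ) (e r : List Bool) : wt x (Jm (e, r)) = x * (wt x e * wt x r) := by
  simp only [wt, Jm, List.count_cons, List.count_append]
  rw [pow_add]
  norm_num
  ring

lemma tsum_J (x : ℝ) (hx : |x| < 1 / 4) (m : ℕ) :
    ∑' l : ↑(Jm '' (Db 0 ×ˢ Db m)), wt x l.1 = x * (Ssum x 0 * Ssum x m) := by
  rw [tsum_image _ (injOn_J m)]
  rw [← (myProd (Db 0) (Db m)).tsum_eq (f := fun u : ↥(Db 0 ×ˢ Db m) => wt x (Jm u.1))]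
  have : ∀ q : ↥(Db 0) × ↥(Db m),
      wt x (Jm ((myProd (Db 0) (Db m)) q).1) = x * (wt x q.1.1 * wt x q.2.1) := by
    intro q; exact wt_J x q.1.1 q.2.1
  rw [tsum_congr this]
  rw [tsum_mul_left]
  congr 1
  rw [Ssum, Ssum, tsum_mul_tsum_of_summable_norm
    (by simpa [wt, Real.norm_eq_abs, abs_pow] using summable_Db_abs x hx 0)
    (by simpa [wt, Real.norm_eq_abs, abs_pow] using summable_Db_abs x hx m)]

lemma summable_J (x : ℝ) (hx : |x| < 1 / 4) (m m' : ℕ)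
    (hsub : Jm '' (Db 0 ×ˢ Db m) ⊆ Db m') :
    Summable fun l : ↑(Jm '' (Db 0 ×ˢ Db m)) => wt x l.1 :=
  summable_sub hsub (summable_Db x hx m')

lemma Ssum_zero_eq (x : ℝ) (hx : |x| < 1 / 4) :
    Ssum x 0 = 1 + x * (Ssum x 0 * Ssum x 0) := by
  have hsub : Jm '' (Db 0 ×ˢ Db 0) ⊆ Db 0 := by
    rintro l ⟨⟨e, r⟩, ⟨he, hr⟩, rfl⟩; exact J_mem he hr
  conv_lhs => rw [Ssum, Db_zero]
  rw [Summable.tsum_union_disjoint disj_zero ?_ ?_]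
  · congr 1
    · rw [tsum_singleton ([] : List Bool) (wt x)]
      simp [wt]
    · exact tsum_J x hx 0
  · apply summable_sub (f := wt x) (s := Db 0) _ (summable_Db x hx 0)
    intro l hl; rw [hl]; exact ⟨trivial, rfl⟩
  · exact summable_J x hx 0 0 hsub

lemma Ssum_succ_eq (x : ℝ) (hx : |x| < 1 / 4) (m : ℕ) :
    Ssum x (m + 1) = Ssum x m + x * (Ssum x 0 * Ssum x (m + 1)) := by
  have hsub : Jm '' (Db 0 ×ˢ Db (m + 1)) ⊆ Db (m + 1) := by
    rintro l ⟨⟨e, r⟩, ⟨he, hr⟩, rfl⟩; exact J_mem he hr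
  conv_lhs => rw [Ssum, Db_succ]
  rw [Summable.tsum_union_disjoint (disj_succ m) ?_ ?_]
  · congr 1
    · rw [tsum_image _ (injOn_T m)]
      rw [Ssum]
      exact tsum_congr fun l => wt_T x l.1
    · exact tsum_J x hx (m + 1)
  · apply summable_sub (f := wt x) (s := Db (m + 1)) _ (summable_Db x hx (m + 1))
    rintro l ⟨t, ht, rfl⟩; exact T_mem ht
  · exact summable_J x hx (m + 1) (m + 1) hsub

lemma Ssum_pow (x : ℝ) (hx : |x| < 1 / 4) (m : ℕ) :
    Ssum x m = (Ssum x 0) ^ (m + 1) := by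
  have hE := Ssum_zero_eq x hx
  have hunit : (1 - x * Ssum x 0) * Ssum x 0 = 1 := by linear_combination hE
  induction m with
  | zero => simp
  | succ m ih =>
      have hrec := Ssum_succ_eq x hx m
      have : Ssum x (m + 1) * ((1 - x * Ssum x 0) * Ssum x 0) = Ssum x m * Ssum x 0 := by
        linear_combination (Ssum x 0) * hrec
      rw [hunit, mul_one] at this
      rw [this, ih]
      ring

lemma Efun_cont (r : ℝ) (hr0 : 0 ≤ r) (hr : r < 1 / 4) :
    ContinuousOn (fun t : ℝ => Ssum t 0) (Set.Icc (-r) r) := by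
  rw [continuousOn_iff_continuous_restrict]
  show Continuous fun t : ↥(Set.Icc (-r) r) => Ssum (t : ℝ) 0
  simp only [Ssum]
  apply continuous_tsum
    (f := fun (l : Db 0) (t : ↥(Set.Icc (-r) r)) => wt (t : ℝ) l.1)
    (u := fun l : Db 0 => r ^ l.1.count false)
  · intro l
    exact (continuous_pow _).comp continuous_subtype_val
  · have := summable_Db_abs r (by rwa [abs_of_nonneg hr0]) 0
    apply this.congr
    intro l
    rw [abs_of_nonneg hr0]
  · intro l t
    rw [wt, Real.norm_eq_abs, abs_pow]
    apply pow_le_pow_left₀ (abs_nonneg _)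
    exact abs_le.mpr ⟨t.2.1, t.2.2⟩

lemma hsq (t : ℝ) (ht : |t| < 1 / 4) :
    (2 * t * Ssum t 0 - 1) ^ 2 = 1 - 4 * t := by
  have hE := Ssum_zero_eq t ht
  linear_combination (-4 * t) * hE

lemma Eneg (c : ℝ) (hc : |c| < 1 / 4) : 2 * c * Ssum c 0 - 1 < 0 := by
  by_contra hcon
  push_neg at hcon
  set r := |c| with hr
  have hr0 : 0 ≤ r := abs_nonneg c
  have hrlt : r < 1 / 4 := hc
  set g : ℝ → ℝ := fun t => 2 * t * Ssum t 0 - 1 with hg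
  have hsub : Set.uIcc (0 : ℝ) c ⊆ Set.Icc (-r) r := by
    apply Set.uIcc_subset_Icc
    · exact ⟨by linarith, hr0⟩
    · exact ⟨neg_abs_le c, le_abs_self c⟩
  have hcont : ContinuousOn g (Set.uIcc (0 : ℝ) c) := by
    apply ContinuousOn.sub
    · exact (ContinuousOn.mul (by fun_prop) (((Efun_cont r hr0 hrlt).mono hsub)))
    · exact continuousOn_const
  have h0 : g 0 = -1 := by simp [hg]
  have hivt := intermediate_value_uIcc hcont
  have h0mem : (0 : ℝ) ∈ Set.uIcc (g 0) (g c) := by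
    rw [h0]
    exact Set.mem_uIcc.mpr (Or.inl ⟨by norm_num, hcon⟩)
  obtain ⟨t, htmem, htz⟩ := hivt h0mem
  have htr : |t| ≤ r := by
    have := hsub htmem
    exact abs_le.mpr ⟨this.1, this.2⟩
  have htsq := hsq t (lt_of_le_of_lt htr hrlt)
  rw [hg] at htz
  simp only at htz
  rw [htz] at htsq
  have : t = 1 / 4 := by nlinarith
  rw [this] at htr
  rw [abs_of_nonneg (by norm_num)] at htr
  linarith

lemma Ssum_zero_val (c : ℝ) (hc0 : c ≠ 0) (hc : |c| < 1 / 4) :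
    Ssum c 0 = (1 - Real.sqrt (1 - 4 * c)) / (2 * c) := by
  have hneg := Eneg c hc
  have hsq' := hsq c hc
  have hs : Real.sqrt (1 - 4 * c) = 1 - 2 * c * Ssum c 0 := by
    rw [← hsq', show (2 * c * Ssum c 0 - 1) ^ 2 = (1 - 2 * c * Ssum c 0) ^ 2 by ring]
    exact Real.sqrt_sq (by linarith)
  rw [hs]
  field_simp
  ring

lemma Ssum_val (c : ℝ) (hc0 : c ≠ 0) (hc : |c| < 1 / 4) (i : ℕ) :
    Ssum c i = ((1 - Real.sqrt (1 - 4 * c)) / (2 * c)) ^ (i + 1) := by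
  rw [Ssum_pow c hc i, Ssum_zero_val c hc0 hc]
def enc : RStep → Bool := fun s => match s with | .U => true | _ => false
def dec : Bool → RStep := fun b => if b then .U else .B

def allUB (l : List RStep) : Prop := ∀ s ∈ l, s = RStep.U ∨ s = RStep.B

lemma endPt_fst_sub_snd (l : List RStep) : ∀ s : ℤ × ℤ,
    (endPt s l).1 - (endPt s l).2 =
      (s.1 - s.2) + (l.map (fun st => st.disp.1 - st.disp.2)).sum := by
  induction l with
  | nil => intro s; simp [endPt]
  | cons st l ih =>
      intro s
      rw [endPt, ih]
      simp only [List.map_cons, List.sum_cons, Prod.fst_add, Prod.snd_add]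
      ring

lemma sum_zero_of_nonneg : ∀ (L : List ℤ), (∀ z ∈ L, 0 ≤ z) → L.sum = 0 →
    ∀ z ∈ L, z = 0 := by
  intro L
  induction L with
  | nil => intro _ _ z hz; simp at hz
  | cons a L ih =>
      intro hnn hsum z hz
      have ha : 0 ≤ a := hnn a (by simp)
      have hL : 0 ≤ L.sum := List.sum_nonneg (fun y hy => hnn y (by simp [hy]))
      rw [List.sum_cons] at hsum
      rcases List.mem_cons.mp hz with rfl | hz'
      · omega
      · exact ih (fun y hy => hnn y (by simp [hy])) (by omega) z hz'

lemma allUB_of_mem_Gamma {i : ℕ} {l : List RStep} (hl : l ∈ Gamma i 0 i) : allUB l := by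
  obtain ⟨_, h2⟩ := hl
  have key := endPt_fst_sub_snd l (0, ((0 : ℕ) : ℤ))
  rw [h2] at key
  simp at key
  intro s hs
  have hz := sum_zero_of_nonneg (l.map (fun st => st.disp.1 - st.disp.2))
    (by
      intro z hz
      rw [List.mem_map] at hz
      obtain ⟨st, _, rfl⟩ := hz
      cases st <;> simp [RStep.disp])
    key.symm (s.disp.1 - s.disp.2) (List.mem_map.mpr ⟨s, hs, rfl⟩)
  cases s <;> simp [RStep.disp] at hz ⊢

lemma hnn_iff (l : List RStep) : ∀ h : ℤ, allUB l →
    (heightsNonneg h l ↔ bok h (l.map enc)) := by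
  induction l with
  | nil => intro h _; simp [heightsNonneg, List.map_nil]
  | cons s l ih =>
      intro h hUB
      have hs := hUB s (by simp)
      have hUB' : allUB l := fun t ht => hUB t (by simp [ht])
      rcases hs with rfl | rfl <;>
        simp [heightsNonneg, enc, bok_cons, bd, RStep.disp, ih _ hUB']

lemma endPt_snd (l : List RStep) : ∀ (x h : ℤ), allUB l →
    (endPt (x, h) l).2 = bht h (l.map enc) := by
  induction l with
  | nil => intro x h _; simp [endPt]
  | cons s l ih =>
      intro x h hUB
      have hs := hUB s (by simp)
      have hUB' : allUB l := fun t ht => hUB t (by simp [ht])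
      rcases hs with rfl | rfl <;>
        simpa [endPt, enc, bd, RStep.disp, Prod.ext_iff] using ih _ _ hUB'

lemma endPt_fst (l : List RStep) : ∀ (x h : ℤ), allUB l →
    (endPt (x, h) l).1 = x - h + bht h (l.map enc) := by
  induction l with
  | nil => intro x h _; simp [endPt]
  | cons s l ih =>
      intro x h hUB
      have hs := hUB s (by simp)
      have hUB' : allUB l := fun t ht => hUB t (by simp [ht])
      rcases hs with rfl | rfl
      · rw [endPt, ih _ _ hUB']
        simp only [List.map_cons, bht_cons, enc, bd, RStep.disp]
        norm_num
      · rw [endPt, ih _ _ hUB']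
        simp only [List.map_cons, bht_cons, enc, bd, RStep.disp]
        norm_num

lemma pathWt_eq (a b lam c : ℝ) (l : List RStep) : ∀ h : ℤ, allUB l →
    pathWt (fun _ => a) (fun _ => b) (fun _ => lam) (fun _ => c) h l
      = c ^ ((l.map enc).count false) := by
  induction l with
  | nil => intro h _; simp [pathWt]
  | cons s l ih =>
      intro h hUB
      have hs := hUB s (by simp)
      have hUB' : allUB l := fun t ht => hUB t (by simp [ht])
      rcases hs with rfl | rfl <;>
        rw [pathWt, ih _ hUB'] <;>
        simp [stepWt, enc, List.count_cons, pow_succ] <;> ring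

lemma map_dec_enc {l : List RStep} (h : allUB l) : (l.map enc).map dec = l := by
  induction l with
  | nil => rfl
  | cons s l ih =>
      have hs := h s (by simp)
      have h' : allUB l := fun t ht => h t (by simp [ht])
      rcases hs with rfl | rfl <;> simp [enc, dec, ih h']

lemma map_enc_dec (L : List Bool) : (L.map dec).map enc = L := by
  induction L with
  | nil => rfl
  | cons b L ih => cases b <;> simp [enc, dec, ih]

lemma allUB_map_dec (L : List Bool) : allUB (L.map dec) := by
  intro s hs
  rw [List.mem_map] at hs
  obtain ⟨b, _, rfl⟩ := hs
  cases b <;> simp [dec]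

def gammaEquiv (i : ℕ) : ↥(Gamma i 0 i) ≃ ↥(Db i) where
  toFun p := ⟨p.1.map enc, by
    have hUB := allUB_of_mem_Gamma p.2
    obtain ⟨h1, h2⟩ := p.2
    constructor
    · exact (hnn_iff p.1 _ hUB).mp (by simpa using h1)
    · have hthis := endPt_snd p.1 0 0 hUB
      have h2' : endPt (0, 0) p.1 = ((i:ℤ), (i:ℤ)) := by simpa using h2
      rw [h2'] at hthis
      simpa using hthis.symm⟩
  invFun q := ⟨q.1.map dec, by
    have hUB := allUB_map_dec q.1
    obtain ⟨h1, h2⟩ := q.2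
    constructor
    · show heightsNonneg ((0:ℕ):ℤ) _
      rw [show (((0:ℕ):ℤ)) = 0 by simp, hnn_iff _ _ hUB, map_enc_dec]
      exact h1
    · have hsnd := endPt_snd (q.1.map dec) 0 0 hUB
      have hfst := endPt_fst (q.1.map dec) 0 0 hUB
      rw [map_enc_dec] at hsnd hfst
      have : endPt (0, ((0:ℕ):ℤ)) (q.1.map dec) = ((i:ℤ), (i:ℤ)) := by
        apply Prod.ext
        · simpa [h2] using hfst
        · simpa [h2] using hsnd
      exact this⟩
  left_inv p := Subtype.ext (map_dec_enc (allUB_of_mem_Gamma p.2))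
  right_inv q := Subtype.ext (map_enc_dec q.1)

end
end S19

/-- Let `a, b, λ, c` be real with `c ≠ 0` and `|c| < 1/4`, with constant weights.
Then for every `i ≥ 0` the family `(wt(p))_{p∈Γ_{i,0,i}}` is summable and
`Σ_{p∈Γ_{i,0,i}} wt(p) = 𝒞^{i+1}`, where `𝒞 = (1−√(1−4c))/(2c)`. -/
theorem stmt19 (a b lam c : ℝ) (hc0 : c ≠ 0) (hc : |c| < 1 / 4) (i : ℕ) :
    (Summable fun p : Gamma i 0 i =>
      pathWt (fun _ => a) (fun _ => b) (fun _ => lam) (fun _ => c) 0 p.1) ∧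
      (∑' p : Gamma i 0 i,
          pathWt (fun _ => a) (fun _ => b) (fun _ => lam) (fun _ => c) 0 p.1) =
        ((1 - Real.sqrt (1 - 4 * c)) / (2 * c)) ^ (i + 1) := by
  classical
  have key : ∀ p : ↥(Gamma i 0 i),
      pathWt (fun _ => a) (fun _ => b) (fun _ => lam) (fun _ => c) 0 p.1
        = S19.wt c (((S19.gammaEquiv i) p) : List Bool) := by
    intro p
    have hUB := S19.allUB_of_mem_Gamma p.2
    rw [S19.pathWt_eq a b lam c p.1 0 hUB]
    rfl
  have hsum : Summable fun q : ↥(S19.Db i) => S19.wt c (q : List Bool) :=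
    S19.summable_Db c hc i
  have hsum2 : Summable ((fun q : ↥(S19.Db i) => S19.wt c (q : List Bool)) ∘
      (S19.gammaEquiv i)) := hsum.comp_injective (S19.gammaEquiv i).injective
  have htsum := (S19.gammaEquiv i).tsum_eq
    (fun q : ↥(S19.Db i) => S19.wt c (q : List Bool))
  constructor
  · exact hsum2.congr fun p => (key p).symm
  · rw [tsum_congr key, htsum]
    exact S19.Ssum_val c hc0 hc i
end
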